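/- arXiv:math-ph/0503010 — 6 statements merged into one kernel-verified Lean document; each statement's English description precedes it below -/
import Mathlib

section
/- Let n ≥ 1, N ≥ 0, k ∈ ℂⁿ, and u : ℝⁿ → ℂ. The following are equivalent: (i) u is a Floquet function of order N with quasimomentum k, i.e. u(x) = e^{i k·x} ∑_{|j|≤N} x^j p_j(x) where j ranges over multi-indices with |j| ≤ N and each p_j is ℤⁿ-periodic; (ii) Δ_{g₁;k} ∘ ⋯ ∘ Δ_{g_{N+1};k} u = 0 for all g₁,…,g_{N+1} ∈ ℤⁿ; (iii) Δ_{g₁;k} ∘ ⋯ ∘ Δ_{g_{N+1};k} u = 0 whenever each g_i is one of the standard basis vectors e₁,…,eₙ of ℤⁿ. -/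
open Complex BigOperators

/-- The finite set of multi-indices `j : Fin n → ℕ` with `|j| = ∑ i, j i ≤ N`. -/
def multiIdx (n N : ℕ) : Finset (Fin n → ℕ) :=
  (Fintype.piFinset fun _ : Fin n => Finset.range (N + 1)).filter fun j => ∑ i, j i ≤ N

/-- A function on `ℝⁿ` is `ℤⁿ`-periodic. -/
def ZnPeriodic {n : ℕ} (p : (Fin n → ℝ) → ℂ) : Prop :=
  ∀ (x : Fin n → ℝ) (g : Fin n → ℤ), p (x + fun i => (g i : ℝ)) = p x

/-- `u` is a Floquet function of order `N` with quasimomentum `k`: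
`u(x) = e^{i k·x} ∑_{|j|≤N} x^j p_j(x)` with each `p_j` being `ℤⁿ`-periodic. -/
def IsFloquet {n : ℕ} (N : ℕ) (k : Fin n → ℂ) (u : (Fin n → ℝ) → ℂ) : Prop :=
  ∃ p : (Fin n → ℕ) → (Fin n → ℝ) → ℂ,
    (∀ j, ZnPeriodic (p j)) ∧
    ∀ x, u x = Complex.exp (Complex.I * ∑ i, k i * (x i : ℂ)) *
      ∑ j ∈ multiIdx n N, (∏ i, (x i : ℂ) ^ j i) * p j x

/-- Twisted first difference `(Δ_{g;k}u)(x) = e^{−i k·g} u(x+g) − u(x)`. -/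
noncomputable def twDiff {n : ℕ} (k : Fin n → ℂ) (g : Fin n → ℤ) (u : (Fin n → ℝ) → ℂ) :
    (Fin n → ℝ) → ℂ :=
  fun x => Complex.exp (-Complex.I * ∑ i, k i * (g i : ℂ)) * u (x + fun i => (g i : ℝ)) - u x

/-- Iterated twisted differences `Δ_{g₁;k} ∘ ⋯ ∘ Δ_{g_m;k}` applied to `u`. -/
noncomputable def twDiffIter {n : ℕ} (k : Fin n → ℂ) (gs : List (Fin n → ℤ)) (u : (Fin n → ℝ) → ℂ) :
    (Fin n → ℝ) → ℂ :=
  gs.foldr (twDiff k) u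

/-- The standard basis vector `e_m ∈ ℤⁿ`. -/
def stdBasis {n : ℕ} (m : Fin n) : Fin n → ℤ := fun i => if i = m then 1 else 0

lemma ZnPeriodic.mul {n : ℕ} {p q : (Fin n → ℝ) → ℂ} (hp : ZnPeriodic p) (hq : ZnPeriodic q) :
    ZnPeriodic (fun x => p x * q x) := fun x g => by simp [hp x g, hq x g]

lemma ZnPeriodic.const {n : ℕ} (c : ℂ) : ZnPeriodic (fun _ : Fin n → ℝ => c) := fun _ _ => rfl

namespace FloquetAux

variable {n : ℕ}

/-- integer shift as a real vector -/
def shift (g : Fin n → ℤ) : Fin n → ℝ := fun i => (g i : ℝ)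

/-- plain (untwisted) first difference -/
def pd (g : Fin n → ℤ) (w : (Fin n → ℝ) → ℂ) : (Fin n → ℝ) → ℂ :=
  fun x => w (x + shift g) - w x

def pdIter (gs : List (Fin n → ℤ)) (w : (Fin n → ℝ) → ℂ) : (Fin n → ℝ) → ℂ :=
  gs.foldr pd w

lemma mem_multiIdx {N : ℕ} {j : Fin n → ℕ} : j ∈ multiIdx n N ↔ (∀ i, j i < N + 1) ∧ ∑ i, j i ≤ N := by
  simp [multiIdx, Fintype.mem_piFinset]

lemma mem_multiIdx_of_sum {N : ℕ} {j : Fin n → ℕ} (h : ∑ i, j i ≤ N) : j ∈ multiIdx n N := by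
  refine mem_multiIdx.mpr ⟨fun i => ?_, h⟩
  have : j i ≤ ∑ t, j t := Finset.single_le_sum (fun t _ => Nat.zero_le _) (Finset.mem_univ i)
  omega

/-- the class of "polynomial with periodic coefficients of degree ≤ d" functions -/
inductive Fl (n : ℕ) : ℕ → ((Fin n → ℝ) → ℂ) → Prop
  | mono (d : ℕ) (j : Fin n → ℕ) (p : (Fin n → ℝ) → ℂ) (hj : ∑ i, j i ≤ d)
      (hp : ZnPeriodic p) : Fl n d (fun x => (∏ i, (x i : ℂ) ^ j i) * p x)
  | zero (d : ℕ) : Fl n d (fun _ => 0)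
  | add (d : ℕ) (w w' : (Fin n → ℝ) → ℂ) : Fl n d w → Fl n d w' → Fl n d (w + w')

lemma Fl.ext {d : ℕ} {w w' : (Fin n → ℝ) → ℂ} (h : ∀ x, w x = w' x) (hw : Fl n d w) :
    Fl n d w' := (funext h : w = w') ▸ hw

lemma Fl.mono_deg {d d' : ℕ} {w : (Fin n → ℝ) → ℂ} (hw : Fl n d w) (hd : d ≤ d') : Fl n d' w := by
  revert hd
  induction hw with
  | mono j p hj hp => exact fun hd => Fl.mono _ j p (hj.trans hd) hp
  | zero => exact fun _ => Fl.zero d'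
  | add w w' h1 h2 ih1 ih2 => exact fun hd => Fl.add d' w w' (ih1 hd) (ih2 hd)

lemma Fl.add' {d : ℕ} {w w' : (Fin n → ℝ) → ℂ} (h1 : Fl n d w) (h2 : Fl n d w') :
    Fl n d (fun x => w x + w' x) := Fl.add d w w' h1 h2

lemma Fl.of_per {d : ℕ} {p : (Fin n → ℝ) → ℂ} (hp : ZnPeriodic p) : Fl n d p :=
  (Fl.mono (n := n) d (fun _ => 0) p (by simp) hp).ext (fun x => by simp)

lemma Fl.const {d : ℕ} (c : ℂ) : Fl n d (fun _ => c) := Fl.of_per (ZnPeriodic.const c)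

lemma Fl.mul_mono {e : ℕ} {w' : (Fin n → ℝ) → ℂ} (hw' : Fl n e w') (d : ℕ) (j : Fin n → ℕ)
    (p : (Fin n → ℝ) → ℂ) (hj : ∑ i, j i ≤ d) (hp : ZnPeriodic p) :
    Fl n (d + e) (fun x => ((∏ i, (x i : ℂ) ^ j i) * p x) * w' x) := by
  induction hw' with
  | mono j' p' hj' hp' =>
      have : Fl n (d + e) (fun x => (∏ i, (x i : ℂ) ^ (j i + j' i)) * (fun y => p y * p' y) x) :=
        Fl.mono _ _ _ (by rw [Finset.sum_add_distrib]; exact Nat.add_le_add hj hj') (hp.mul hp')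
      exact this.ext (fun x => by simp only [pow_add, Finset.prod_mul_distrib]; ring)
  | zero => exact (Fl.zero (d + e)).ext (fun x => by simp)
  | add w1 w2 h1 h2 ih1 ih2 =>
      exact (ih1.add' ih2).ext (fun x => by simp only [Pi.add_apply]; ring)

lemma Fl.mul {d e : ℕ} {w w' : (Fin n → ℝ) → ℂ} (hw : Fl n d w) (hw' : Fl n e w') :
    Fl n (d + e) (fun x => w x * w' x) := by
  induction hw with
  | mono j p hj hp => exact hw'.mul_mono _ j p hj hp
  | zero => exact (Fl.zero (d + e)).ext (fun x => by simp)
  | add w1 w2 h1 h2 ih1 ih2 =>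
      exact (ih1.add' ih2).ext (fun x => by simp only [Pi.add_apply]; ring)

lemma Fl.sum {α : Type*} (s : Finset α) (f : α → (Fin n → ℝ) → ℂ) (d : ℕ)
    (h : ∀ a ∈ s, Fl n d (f a)) : Fl n d (fun x => ∑ a ∈ s, f a x) := by
  classical
  induction s using Finset.induction_on with
  | empty => exact (Fl.zero d).ext (fun x => by simp)
  | insert a s ha ih =>
      have h1 := h a (Finset.mem_insert_self a s)
      have h2 := ih (fun b hb => h b (Finset.mem_insert_of_mem hb))
      exact (h1.add' h2).ext (fun x => by rw [Finset.sum_insert ha])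

lemma Fl.prod {α : Type*} (s : Finset α) (f : α → (Fin n → ℝ) → ℂ) (d : α → ℕ)
    (h : ∀ a ∈ s, Fl n (d a) (f a)) : Fl n (∑ a ∈ s, d a) (fun x => ∏ a ∈ s, f a x) := by
  classical
  induction s using Finset.induction_on with
  | empty => exact (Fl.const 1).ext (fun x => by simp)
  | insert a s ha ih =>
      have h1 := h a (Finset.mem_insert_self a s)
      have h2 := ih (fun b hb => h b (Finset.mem_insert_of_mem hb))
      have := h1.mul h2
      rw [Finset.sum_insert ha]
      exact this.ext (fun x => by rw [Finset.prod_insert ha])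

end FloquetAux

namespace FloquetAux
variable {n : ℕ}

lemma shift_add (g h : Fin n → ℤ) : shift (g + h) = shift g + shift h := by
  funext i
  show ((g i + h i : ℤ) : ℝ) = (g i : ℝ) + (h i : ℝ)
  push_cast
  ring

lemma per_shift {p : (Fin n → ℝ) → ℂ} (hp : ZnPeriodic p) (x : Fin n → ℝ) (g : Fin n → ℤ) :
    p (x + shift g) = p x := hp x g

lemma pd_comm (g h : Fin n → ℤ) (w : (Fin n → ℝ) → ℂ) : pd g (pd h w) = pd h (pd g w) := by
  funext x
  have e : x + shift g + shift h = x + shift h + shift g := by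
    rw [add_assoc, add_assoc, add_comm (shift g)]
  simp only [pd, e]
  ring

lemma pdIter_cons (g : Fin n → ℤ) (gs : List (Fin n → ℤ)) (w : (Fin n → ℝ) → ℂ) :
    pdIter (g :: gs) w = pd g (pdIter gs w) := rfl

lemma pdIter_append_singleton (gs : List (Fin n → ℤ)) (g : Fin n → ℤ) (w : (Fin n → ℝ) → ℂ) :
    pdIter (gs ++ [g]) w = pdIter gs (pd g w) := by
  simp [pdIter, List.foldr_append]

lemma pd_pdIter_comm (g : Fin n → ℤ) (gs : List (Fin n → ℤ)) (w : (Fin n → ℝ) → ℂ) :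
    pd g (pdIter gs w) = pdIter gs (pd g w) := by
  induction gs with
  | nil => rfl
  | cons h t ih => rw [pdIter_cons, pd_comm, ih, pdIter_cons]

lemma pdIter_perm {l₁ l₂ : List (Fin n → ℤ)} (h : l₁.Perm l₂) (w : (Fin n → ℝ) → ℂ) :
    pdIter l₁ w = pdIter l₂ w := by
  unfold pdIter
  exact h.foldr_eq (lcomm := ⟨fun a b z => by simp [pd_comm]⟩) w

lemma pd_zero_of_per {p : (Fin n → ℝ) → ℂ} (hp : ZnPeriodic p) (g : Fin n → ℤ) :
    pd g p = 0 := by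
  funext x
  show p (x + shift g) - p x = 0
  exact sub_eq_zero.mpr (per_shift hp x g)

lemma Fl.pd_zero {w : (Fin n → ℝ) → ℂ} (hw : Fl n 0 w) (g : Fin n → ℤ) : pd g w = 0 := by
  induction hw with
  | mono j p hj hp =>
      have hj0 : ∀ i, j i = 0 := by
        intro i
        have : j i ≤ ∑ t, j t := Finset.single_le_sum (fun t _ => Nat.zero_le _) (Finset.mem_univ i)
        omega
      funext x
      show (∏ i, (((x + shift g) i : ℝ) : ℂ) ^ j i) * p (x + shift g)
        - (∏ i, ((x i : ℝ) : ℂ) ^ j i) * p x = 0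
      rw [per_shift hp x g]
      simp [hj0]
  | zero => funext x; show (0 : ℂ) - 0 = 0; ring
  | add w1 w2 h1 h2 ih1 ih2 =>
      funext x
      have e1 := congrFun ih1 x
      have e2 := congrFun ih2 x
      simp only [pd, Pi.add_apply, Pi.zero_apply] at e1 e2 ⊢
      linear_combination e1 + e2

lemma Fl.diff {d : ℕ} {w : (Fin n → ℝ) → ℂ} (hw : Fl n (d + 1) w) (g : Fin n → ℤ) :
    Fl n d (pd g w) := by
  classical
  induction hw with
  | mono j p hj hp =>
      set S : Finset (Fin n → ℕ) := Fintype.piFinset (fun i => Finset.range (j i + 1)) with hS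
      have hjS : j ∈ S := by
        simp [hS, Fintype.mem_piFinset, Nat.lt_succ_self]
      have key : ∀ x : Fin n → ℝ,
          pd g (fun y => (∏ i, (y i : ℂ) ^ j i) * p y) x
          = ∑ l ∈ S.erase j, (∏ i, (x i : ℂ) ^ l i) *
              ((∏ i, ((g i : ℂ) ^ (j i - l i) * ((j i).choose (l i) : ℂ))) * p x) := by
        intro x
        have hper : p (x + shift g) = p x := per_shift hp x g
        have expand : (∏ i, (((x + shift g) i : ℝ) : ℂ) ^ j i)
            = ∑ l ∈ S, ∏ i, ((x i : ℂ) ^ l i * ((g i : ℂ) ^ (j i - l i) * ((j i).choose (l i) : ℂ))) := by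
          have step1 : (∏ i, (((x + shift g) i : ℝ) : ℂ) ^ j i)
              = ∏ i, ∑ t ∈ Finset.range (j i + 1),
                  (x i : ℂ) ^ t * ((g i : ℂ) ^ (j i - t) * ((j i).choose t : ℂ)) := by
            refine Finset.prod_congr rfl fun i _ => ?_
            have hx : (((x + shift g) i : ℝ) : ℂ) = (x i : ℂ) + (g i : ℂ) := by
              simp only [Pi.add_apply, shift]
              push_cast
              ring
            rw [hx, add_pow]
            exact Finset.sum_congr rfl fun t _ => by ring
          rw [step1, hS]
          exact Finset.prod_univ_sum _ _
        have split : ∑ l ∈ S, ∏ i, ((x i : ℂ) ^ l i * ((g i : ℂ) ^ (j i - l i) * ((j i).choose (l i) : ℂ)))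
            = (∑ l ∈ S.erase j, ∏ i, ((x i : ℂ) ^ l i * ((g i : ℂ) ^ (j i - l i) * ((j i).choose (l i) : ℂ))))
              + ∏ i, (x i : ℂ) ^ j i := by
          rw [← Finset.sum_erase_add S _ hjS]
          congr 1
          refine Finset.prod_congr rfl fun i _ => by simp [Nat.sub_self, Nat.choose_self]
        calc pd g (fun y => (∏ i, (y i : ℂ) ^ j i) * p y) x
            = ((∑ l ∈ S.erase j, ∏ i, ((x i : ℂ) ^ l i * ((g i : ℂ) ^ (j i - l i) * ((j i).choose (l i) : ℂ))))
                + ∏ i, (x i : ℂ) ^ j i) * p x - (∏ i, (x i : ℂ) ^ j i) * p x := by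
              show (∏ i, (((x + shift g) i : ℝ) : ℂ) ^ j i) * p (x + shift g)
                  - (∏ i, ((x i : ℝ) : ℂ) ^ j i) * p x = _
              rw [hper, expand, split]
          _ = ∑ l ∈ S.erase j, (∏ i, ((x i : ℂ) ^ l i * ((g i : ℂ) ^ (j i - l i) * ((j i).choose (l i) : ℂ)))) * p x := by
              rw [add_mul, Finset.sum_mul]
              ring
          _ = ∑ l ∈ S.erase j, (∏ i, (x i : ℂ) ^ l i) *
              ((∏ i, ((g i : ℂ) ^ (j i - l i) * ((j i).choose (l i) : ℂ))) * p x) := by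
              refine Finset.sum_congr rfl fun l _ => ?_
              rw [Finset.prod_mul_distrib]
              ring
      refine (Fl.sum (S.erase j) _ d fun l hl => ?_).ext (fun x => (key x).symm)
      have hlS := Finset.mem_of_mem_erase hl
      have hlj := Finset.ne_of_mem_erase hl
      have hle : ∀ i, l i ≤ j i := by
        intro i
        have := (Fintype.mem_piFinset.mp hlS) i
        simpa [Finset.mem_range, Nat.lt_succ_iff] using this
      have hlt : ∑ i, l i < ∑ i, j i := by
        refine Finset.sum_lt_sum (fun i _ => hle i) ?_
        obtain ⟨i, hi⟩ := Function.ne_iff.mp hlj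
        exact ⟨i, Finset.mem_univ i, lt_of_le_of_ne (hle i) hi⟩
      exact Fl.mono d l _ (by omega) (ZnPeriodic.mul (ZnPeriodic.const _) hp)
  | zero => exact (Fl.zero d).ext (fun x => by simp [pd])
  | add w1 w2 h1 h2 ih1 ih2 =>
      exact (Fl.add' ih1 ih2).ext (fun x => by simp [pd, Pi.add_apply]; ring)

lemma Fl.kill {N : ℕ} {w : (Fin n → ℝ) → ℂ} (hw : Fl n N w) :
    ∀ gs : List (Fin n → ℤ), gs.length = N + 1 → pdIter gs w = 0 := by
  induction N generalizing w with
  | zero =>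
      intro gs hgs
      rcases gs with _ | ⟨g, gs'⟩
      · simp at hgs
      · rcases gs' with _ | ⟨h, t⟩
        · exact hw.pd_zero g
        · simp at hgs
  | succ N ih =>
      intro gs hgs
      have hne : gs ≠ [] := by intro h; subst h; simp at hgs
      obtain ⟨gs', g, rfl⟩ : ∃ gs' g, gs = gs' ++ [g] := by
        rcases List.eq_nil_or_concat gs with h | ⟨gs', g, h⟩
        · exact absurd h hne
        · exact ⟨gs', g, by simpa [List.concat_eq_append] using h⟩
      rw [pdIter_append_singleton]
      refine ih (hw.diff g) gs' ?_
      simpa using hgs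

end FloquetAux


namespace FloquetAux
variable {n : ℕ}

/-- constancy along the lattice for functions on ℤⁿ -/
lemma int_lattice_const (f : (Fin n → ℤ) → ℂ)
    (h : ∀ (m : Fin n → ℤ) (r : Fin n), f (m + stdBasis r) = f m) :
    ∀ g : Fin n → ℤ, f g = f 0 := by
  classical
  have hstep : ∀ (m : Fin n → ℤ) (r : Fin n) (c : ℤ),
      f (m + fun i => if i = r then c else 0) = f m := by
    intro m r c
    induction c using Int.induction_on with
    | zero =>
        have e : (m + fun i => if i = r then (0:ℤ) else 0) = m := by
          funext i
          show m i + (if i = r then (0:ℤ) else 0) = m i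
          split <;> ring
        rw [e]
    | succ c ih =>
        have e1 : (m + fun i => if i = r then (c:ℤ) else 0) + stdBasis r
            = m + fun i => if i = r then (c + 1 : ℤ) else 0 := by
          funext i
          show m i + (if i = r then (c:ℤ) else 0) + (if i = r then (1:ℤ) else 0)
            = m i + (if i = r then (c + 1 : ℤ) else 0)
          by_cases hir : i = r <;> simp [hir] <;> ring
        calc f (m + fun i => if i = r then (c + 1 : ℤ) else 0)
            = f ((m + fun i => if i = r then (c:ℤ) else 0) + stdBasis r) := by rw [e1]
          _ = f (m + fun i => if i = r then (c:ℤ) else 0) := h _ r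
          _ = f m := ih
    | pred c ih =>
        have e1 : (m + fun i => if i = r then (-c - 1 : ℤ) else 0) + stdBasis r
            = m + fun i => if i = r then (-c : ℤ) else 0 := by
          funext i
          show m i + (if i = r then (-c - 1:ℤ) else 0) + (if i = r then (1:ℤ) else 0)
            = m i + (if i = r then (-c : ℤ) else 0)
          by_cases hir : i = r <;> simp [hir] <;> ring
        have h2 := h (m + fun i => if i = r then (-c - 1 : ℤ) else 0) r
        rw [e1] at h2
        exact h2.symm.trans ih
  have main : ∀ (s : Finset (Fin n)) (g : Fin n → ℤ), (∀ i ∉ s, g i = 0) → f g = f 0 := by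
    intro s
    induction s using Finset.induction_on with
    | empty =>
        intro g hg
        have : g = 0 := by funext i; exact hg i (Finset.notMem_empty i)
        rw [this]
    | insert a s ha ih =>
        intro g hg
        have e : g = (Function.update g a 0) + fun i => if i = a then g a else 0 := by
          funext i
          show g i = Function.update g a 0 i + (if i = a then g a else 0)
          by_cases hia : i = a
          · subst hia; rw [Function.update_self, if_pos rfl]; ring
          · rw [Function.update_of_ne hia, if_neg hia]; ring
        rw [e, hstep (Function.update g a 0) a (g a)]
        refine ih (Function.update g a 0) fun i hi => ?_
        by_cases hia : i = a
        · subst hia; exact Function.update_self i 0 g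
        · rw [Function.update_of_ne hia]
          exact hg i (by simp [hia, hi])
  intro g
  exact main Finset.univ g (fun i hi => absurd (Finset.mem_univ i) hi)

/-- real version: if all basis differences vanish, the function is ℤⁿ-periodic -/
lemma per_of_basis_pd_zero {w : (Fin n → ℝ) → ℂ}
    (h : ∀ r : Fin n, pd (stdBasis r) w = 0) : ZnPeriodic w := by
  intro x g
  have key : ∀ (m : Fin n → ℤ) (r : Fin n),
      (fun m' => w (x + shift m')) (m + stdBasis r) = (fun m' => w (x + shift m')) m := by
    intro m r
    have h0 := congrFun (h r) (x + shift m)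
    simp only [pd, Pi.zero_apply] at h0
    have e : x + shift m + shift (stdBasis r) = x + shift (m + stdBasis r) := by
      rw [shift_add]; ring
    rw [e] at h0
    simpa using sub_eq_zero.mp h0
  have := int_lattice_const (fun m' => w (x + shift m')) key g
  have e0 : x + shift (0 : Fin n → ℤ) = x := by
    funext i; show x i + ((0:ℤ):ℝ) = x i; simp
  show w (x + shift g) = w x
  rw [this, e0]

end FloquetAux


namespace FloquetAux
variable {n : ℕ}

/-- generalized binomial coefficient as a polynomial function -/
noncomputable def cbinom (z : ℂ) (j : ℕ) : ℂ :=
  (∏ t ∈ Finset.range j, (z - t)) / (j.factorial : ℂ)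

lemma cbinom_zero (z : ℂ) : cbinom z 0 = 1 := by simp [cbinom]

lemma cbinom_pascal (z : ℂ) (j : ℕ) :
    cbinom (z + 1) (j + 1) - cbinom z (j + 1) = cbinom z j := by
  have h1 : ∏ t ∈ Finset.range (j + 1), (z + 1 - t) = (z + 1) * ∏ t ∈ Finset.range j, (z - t) := by
    rw [Finset.prod_range_succ']
    have : ∀ t ∈ Finset.range j, (z + 1 - ((t + 1 : ℕ) : ℂ)) = z - t := by
      intro t _; push_cast; ring
    rw [Finset.prod_congr rfl this]
    ring
  have h2 : ∏ t ∈ Finset.range (j + 1), (z - t) = (∏ t ∈ Finset.range j, (z - t)) * (z - j) :=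
    Finset.prod_range_succ _ j
  have hfac : ((j + 1).factorial : ℂ) = (j + 1) * (j.factorial : ℂ) := by
    rw [Nat.factorial_succ]; push_cast; ring
  have hj1 : ((j : ℂ) + 1) ≠ 0 := by
    have := Nat.cast_add_one_ne_zero (R := ℂ) j
    simpa using this
  have hjf : (j.factorial : ℂ) ≠ 0 := Nat.cast_ne_zero.mpr (Nat.factorial_ne_zero j)
  rw [cbinom, cbinom, cbinom, h1, h2, hfac]
  field_simp
  ring

lemma cbinom_zero_left (j : ℕ) : cbinom 0 (j + 1) = 0 := by
  rw [cbinom]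
  rw [Finset.prod_eq_zero (Finset.mem_range.mpr (Nat.succ_pos j)) (by simp)]
  simp

/-- canonical list of directions for a multi-index -/
def toList (j : Fin n → ℕ) : List (Fin n) :=
  (List.finRange n).flatMap fun i => List.replicate (j i) i

lemma count_bind {α β : Type*} [DecidableEq β] (l : List α) (f : α → List β) (b : β) :
    (l.flatMap f).count b = (l.map fun a => (f a).count b).sum := by
  induction l with
  | nil => simp
  | cons a t ih => simp [List.count_append, ih]

lemma count_toList (j : Fin n → ℕ) (a : Fin n) : (toList j).count a = j a := by
  rw [toList, count_bind]
  have : ∀ i : Fin n, (List.replicate (j i) i).count a = if a = i then j i else 0 := by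
    intro i
    rcases eq_or_ne a i with h | h
    · subst h; simp [List.count_replicate]
    · simp [List.count_replicate, h, Ne.symm h]
  rw [List.map_congr_left (fun i _ => this i)]
  rw [← Fin.sum_univ_def]
  rw [Finset.sum_ite_eq]
  simp

lemma length_toList (j : Fin n → ℕ) : (toList j).length = ∑ i, j i := by
  rw [toList, List.length_flatMap]
  have : ∀ i : Fin n, (fun a => (List.replicate (j a) a).length) i = j i := by
    intro i; simp
  rw [List.map_congr_left (fun i _ => this i)]
  rw [← Fin.sum_univ_def]

/-- iterated basis differences for a multi-index -/
def DM (j : Fin n → ℕ) (w : (Fin n → ℝ) → ℂ) : (Fin n → ℝ) → ℂ :=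
  pdIter ((toList j).map stdBasis) w

lemma DM_zero (w : (Fin n → ℝ) → ℂ) : DM (fun _ => 0) w = w := by
  have : toList (n := n) (fun _ => 0) = [] := by
    rw [← List.length_eq_zero_iff, length_toList]
    simp
  rw [DM, this]
  rfl

lemma DM_succ (j : Fin n → ℕ) (r : Fin n) (w : (Fin n → ℝ) → ℂ) :
    DM (j + fun i => if i = r then 1 else 0) w = DM j (pd (stdBasis r) w) := by
  have hperm : (toList (j + fun i => if i = r then 1 else 0)).Perm (r :: toList j) := by
    rw [List.perm_iff_count]
    intro a
    rw [count_toList]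
    rcases eq_or_ne a r with h | h
    · subst h
      simp [List.count_cons, count_toList]
    · simp [List.count_cons, h, Ne.symm h, count_toList]
  rw [DM, pdIter_perm (hperm.map stdBasis)]
  show pd (stdBasis r) (pdIter ((toList j).map stdBasis) w) = _
  rw [pd_pdIter_comm]
  rfl

end FloquetAux


namespace FloquetAux
variable {n : ℕ}

lemma multiIdx_zero : multiIdx n 0 = {fun _ => 0} := by
  ext j
  simp only [mem_multiIdx, Finset.mem_singleton]
  constructor
  · rintro ⟨h1, h2⟩
    funext i
    have := h1 i
    omega
  · rintro rfl
    simp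

lemma cbinom_prod_zero {j : Fin n → ℕ} (hj : j ≠ fun _ => 0) :
    (∏ i, cbinom 0 (j i)) = 0 := by
  obtain ⟨i, hi⟩ := Function.ne_iff.mp hj
  rcases Nat.exists_eq_succ_of_ne_zero hi with ⟨t, ht⟩
  exact Finset.prod_eq_zero (Finset.mem_univ i) (by rw [ht]; exact cbinom_zero_left t)

lemma sum_add_single (a : Fin n → ℕ) (r : Fin n) :
    ∑ t, (a t + if t = r then 1 else 0) = (∑ t, a t) + 1 := by
  rw [Finset.sum_add_distrib, Finset.sum_ite_eq' Finset.univ r]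
  simp

lemma newton : ∀ (N : ℕ) (w : (Fin n → ℝ) → ℂ),
    (∀ l : List (Fin n), l.length = N + 1 → pdIter (l.map stdBasis) w = 0) →
    ∀ (φ : Fin n → ℝ) (m : Fin n → ℤ),
      w (φ + shift m) = ∑ j ∈ multiIdx n N, (∏ i, cbinom ((m i : ℤ) : ℂ) (j i)) * DM j w φ := by
  intro N
  induction N with
  | zero =>
      intro w hw φ m
      have hper : ZnPeriodic w := by
        refine per_of_basis_pd_zero fun r => ?_
        have := hw [r] (by simp)
        simpa [pdIter] using this
      rw [multiIdx_zero, Finset.sum_singleton, DM_zero]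
      simp only [cbinom_zero, Finset.prod_const_one, one_mul]
      exact per_shift hper φ m
  | succ N ih =>
      intro w hw φ m
      have hv : ∀ r : Fin n, ∀ l : List (Fin n), l.length = N + 1 →
          pdIter (l.map stdBasis) (pd (stdBasis r) w) = 0 := by
        intro r l hl
        rw [← pdIter_append_singleton]
        have e : (l.map stdBasis) ++ [stdBasis r] = (l ++ [r]).map stdBasis := by simp
        rw [e]
        exact hw (l ++ [r]) (by simp [hl])
      set F : (Fin n → ℤ) → ℂ := fun m' => w (φ + shift m')
        - ∑ j ∈ multiIdx n (N + 1), (∏ i, cbinom ((m' i : ℤ) : ℂ) (j i)) * DM j w φ with hF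
      have hstep : ∀ (m' : Fin n → ℤ) (r : Fin n), F (m' + stdBasis r) = F m' := by
        intro m' r
        have hwstep : w (φ + shift (m' + stdBasis r))
            = w (φ + shift m') + pd (stdBasis r) w (φ + shift m') := by
          rw [shift_add, ← add_assoc]
          show _ = _ + (w ((φ + shift m') + shift (stdBasis r)) - w (φ + shift m'))
          ring
        have hdiff : ∑ j ∈ multiIdx n (N + 1),
              ((∏ i, cbinom (((m' + stdBasis r) i : ℤ) : ℂ) (j i))
                - (∏ i, cbinom ((m' i : ℤ) : ℂ) (j i))) * DM j w φ
            = ∑ j' ∈ multiIdx n N,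
              (∏ i, cbinom ((m' i : ℤ) : ℂ) (j' i)) * DM j' (pd (stdBasis r) w) φ := by
          have stepA : ∀ j ∈ multiIdx n (N + 1),
              ((∏ i, cbinom (((m' + stdBasis r) i : ℤ) : ℂ) (j i))
                - (∏ i, cbinom ((m' i : ℤ) : ℂ) (j i))) * DM j w φ
              = (cbinom (((m' r : ℤ) : ℂ) + 1) (j r) - cbinom ((m' r : ℤ) : ℂ) (j r))
                  * ((∏ i ∈ Finset.univ.erase r, cbinom ((m' i : ℤ) : ℂ) (j i)) * DM j w φ) := by
            intro j _
            have hcast : ∀ i, (((m' + stdBasis r) i : ℤ) : ℂ)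
                = if i = r then ((m' r : ℤ) : ℂ) + 1 else ((m' i : ℤ) : ℂ) := by
              intro i
              by_cases hir : i = r
              · subst hir
                have e : (m' + stdBasis i) i = m' i + 1 := by simp [stdBasis]
                rw [e, if_pos rfl]
                push_cast
                ring
              · have e : (m' + stdBasis r) i = m' i := by simp [stdBasis, hir]
                rw [e, if_neg hir]
            have e1 : (∏ i, cbinom (((m' + stdBasis r) i : ℤ) : ℂ) (j i))
                = cbinom (((m' r : ℤ) : ℂ) + 1) (j r)
                  * ∏ i ∈ Finset.univ.erase r, cbinom ((m' i : ℤ) : ℂ) (j i) := by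
              rw [← Finset.mul_prod_erase Finset.univ _ (Finset.mem_univ r)]
              congr 1
              · rw [hcast r, if_pos rfl]
              · refine Finset.prod_congr rfl fun i hi => ?_
                rw [hcast i, if_neg (Finset.ne_of_mem_erase hi)]
            have e2 : (∏ i, cbinom ((m' i : ℤ) : ℂ) (j i))
                = cbinom ((m' r : ℤ) : ℂ) (j r)
                  * ∏ i ∈ Finset.univ.erase r, cbinom ((m' i : ℤ) : ℂ) (j i) :=
              (Finset.mul_prod_erase Finset.univ _ (Finset.mem_univ r)).symm
            rw [e1, e2]
            ring
          rw [Finset.sum_congr rfl stepA]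
          rw [← Finset.sum_filter_of_ne (p := fun j => j r ≠ 0) (fun j _ hne hjr => by
            apply hne
            simp only [hjr, cbinom_zero, sub_self, zero_mul])]
          refine Finset.sum_bij'
            (fun j _ => fun t => if t = r then j r - 1 else j t)
            (fun j' _ => fun t => j' t + if t = r then 1 else 0)
            ?_ ?_ ?_ ?_ ?_
          · intro j hj
            rcases Finset.mem_filter.mp hj with ⟨hj1, hj2⟩
            refine mem_multiIdx_of_sum ?_
            have hsum := (mem_multiIdx.mp hj1).2
            have heq : ∀ t, j t = (if t = r then j r - 1 else j t) + (if t = r then 1 else 0) := by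
              intro t
              by_cases htr : t = r
              · subst htr; simp; omega
              · simp [htr]
            have e2 : ∑ t, j t
                = ∑ t, ((if t = r then j r - 1 else j t) + (if t = r then 1 else 0)) :=
              Finset.sum_congr rfl fun t _ => heq t
            have e1 : ∑ t, ((if t = r then j r - 1 else j t) + if t = r then 1 else 0)
                = (∑ t, if t = r then j r - 1 else j t) + 1 := sum_add_single _ r
            have e3 : (∑ t, if t = r then j r - 1 else j t) + 1 ≤ N + 1 := by
              rw [← e1, ← e2]; exact hsum
            exact Nat.le_of_succ_le_succ e3
          · intro j' hj'
            refine Finset.mem_filter.mpr ⟨mem_multiIdx_of_sum ?_, by simp⟩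
            have hsum := (mem_multiIdx.mp hj').2
            rw [sum_add_single]
            omega
          · intro j hj
            rcases Finset.mem_filter.mp hj with ⟨_, hj2⟩
            funext t
            by_cases htr : t = r
            · subst htr; simp; omega
            · simp [htr]
          · intro j' _
            funext t
            by_cases htr : t = r
            · subst htr; simp
            · simp [htr]
          · intro j hj
            rcases Finset.mem_filter.mp hj with ⟨hj1, hj2⟩
            -- value equality
            set j' : Fin n → ℕ := fun t => if t = r then j r - 1 else j t with hj'def
            have hjj' : (j' + fun t => if t = r then 1 else 0) = j := by
              funext t
              by_cases htr : t = r
              · subst htr; simp [hj'def]; omega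
              · simp [hj'def, htr]
            have hjr : j r = j' r + 1 := by simp [hj'def]; omega
            have hDM : DM j w = DM j' (pd (stdBasis r) w) := by
              rw [← hjj', DM_succ]
            have hprod : ∏ i, cbinom ((m' i : ℤ) : ℂ) (j' i)
                = cbinom ((m' r : ℤ) : ℂ) (j' r)
                  * ∏ i ∈ Finset.univ.erase r, cbinom ((m' i : ℤ) : ℂ) (j i) := by
              rw [← Finset.mul_prod_erase Finset.univ _ (Finset.mem_univ r)]
              congr 1
              refine Finset.prod_congr rfl fun i hi => ?_
              have := Finset.ne_of_mem_erase hi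
              simp [hj'def, this]
            rw [hjr, cbinom_pascal, hDM, hprod]
            ring
        have ihr := ih (pd (stdBasis r) w) (hv r) φ m'
        have hsub : (∑ j ∈ multiIdx n (N + 1), (∏ i, cbinom (((m' + stdBasis r) i : ℤ) : ℂ) (j i)) * DM j w φ)
            - (∑ j ∈ multiIdx n (N + 1), (∏ i, cbinom ((m' i : ℤ) : ℂ) (j i)) * DM j w φ)
            = ∑ j' ∈ multiIdx n N,
              (∏ i, cbinom ((m' i : ℤ) : ℂ) (j' i)) * DM j' (pd (stdBasis r) w) φ := by
          rw [← Finset.sum_sub_distrib, ← hdiff]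
          exact Finset.sum_congr rfl fun j _ => by ring
        rw [hF]
        simp only
        linear_combination hwstep - hsub + ihr - ihr + hsub - hsub + ihr
      have hF0 : F 0 = 0 := by
        rw [hF]
        simp only
        have e0 : φ + shift (0 : Fin n → ℤ) = φ := by
          funext i
          show φ i + ((0:ℤ):ℝ) = φ i
          simp
        rw [e0]
        have hsum : ∑ j ∈ multiIdx n (N + 1), (∏ i, cbinom (((0 : Fin n → ℤ) i : ℤ) : ℂ) (j i)) * DM j w φ
            = w φ := by
          rw [Finset.sum_eq_single (fun _ => 0)]
          · rw [DM_zero]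
            simp [cbinom_zero]
          · intro j hjmem hjne
            have : (∏ i, cbinom (((0 : Fin n → ℤ) i : ℤ) : ℂ) (j i)) = 0 := by
              have := cbinom_prod_zero (n := n) (j := j) hjne
              simpa using this
            rw [this, zero_mul]
          · intro habs
            exact absurd (mem_multiIdx_of_sum (by simp)) habs
        rw [hsum]
        ring
      have := int_lattice_const F hstep m
      rw [hF0] at this
      rw [hF] at this
      simp only at this
      exact sub_eq_zero.mp this

end FloquetAux


namespace FloquetAux
variable {n : ℕ}

lemma Fl_coord (i : Fin n) : Fl n 1 (fun x => ((x i : ℝ) : ℂ)) := by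
  classical
  have h := Fl.mono (n := n) 1 (fun t => if t = i then 1 else 0) (fun _ => 1)
    (by rw [Finset.sum_ite_eq' Finset.univ i]; simp) (ZnPeriodic.const 1)
  refine h.ext fun x => ?_
  simp only [mul_one]
  rw [Finset.prod_eq_single i (fun t _ ht => by rw [if_neg ht, pow_zero])
    (fun h => absurd (Finset.mem_univ i) h)]
  rw [if_pos rfl, pow_one]

lemma Fl_floor (i : Fin n) : Fl n 1 (fun x => ((⌊x i⌋ : ℤ) : ℂ)) := by
  have hper : ZnPeriodic (fun x : Fin n → ℝ => -((Int.fract (x i) : ℝ) : ℂ)) := by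
    intro x g
    simp only
    congr 1
    show ((Int.fract (x i + (g i : ℝ)) : ℝ) : ℂ) = _
    rw [Int.fract_add_intCast]
  have hadd := (Fl_coord i).add' (Fl.of_per (d := 1) hper)
  refine hadd.ext fun x => ?_
  show ((x i : ℝ) : ℂ) + -(((Int.fract (x i) : ℝ)) : ℂ) = ((⌊x i⌋ : ℤ) : ℂ)
  rw [← Complex.ofReal_intCast, ← Int.self_sub_fract]
  push_cast
  ring

lemma Fl_cbinom_floor (i : Fin n) (c : ℕ) :
    Fl n c (fun x => cbinom ((⌊x i⌋ : ℤ) : ℂ) c) := by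
  have hprod : Fl n (∑ _t ∈ Finset.range c, 1) (fun x => ∏ t ∈ Finset.range c,
      (((⌊x i⌋ : ℤ) : ℂ) - (t : ℂ))) := by
    refine Fl.prod (Finset.range c) _ _ fun t _ => ?_
    have := (Fl_floor i).add' (Fl.const (n := n) (d := 1) (-(t : ℂ)))
    exact this.ext fun x => by ring
  have hdeg : (∑ _t ∈ Finset.range c, 1) = c := by simp
  rw [hdeg] at hprod
  have := hprod.mul (Fl.const (n := n) (d := 0) (((c.factorial : ℂ))⁻¹))
  refine (this.mono_deg (by omega)).ext fun x => ?_
  rw [cbinom]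
  rw [div_eq_mul_inv]

lemma Fl.of_basis_kill {N : ℕ} {w : (Fin n → ℝ) → ℂ}
    (h : ∀ l : List (Fin n), l.length = N + 1 → pdIter (l.map stdBasis) w = 0) :
    Fl n N w := by
  have hnewton := newton N w h
  have hx : ∀ x : Fin n → ℝ, w x = ∑ j ∈ multiIdx n N,
      (∏ i, cbinom ((⌊x i⌋ : ℤ) : ℂ) (j i)) * DM j w (fun i => Int.fract (x i)) := by
    intro x
    have e : (fun i => Int.fract (x i)) + shift (fun i => ⌊x i⌋) = x := by
      funext i
      exact Int.fract_add_floor (x i)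
    conv_lhs => rw [← e]
    exact hnewton (fun i => Int.fract (x i)) (fun i => ⌊x i⌋)
  refine (Fl.sum (multiIdx n N) _ N fun j hj => ?_).ext fun x => (hx x).symm
  have hper : ZnPeriodic (fun x : Fin n → ℝ => DM j w (fun i => Int.fract (x i))) := by
    intro x g
    simp only
    congr 1
    funext i
    show Int.fract (x i + (g i : ℝ)) = Int.fract (x i)
    exact Int.fract_add_intCast (x i) (g i)
  have hcb : Fl n (∑ i, j i) (fun x => ∏ i, cbinom ((⌊x i⌋ : ℤ) : ℂ) (j i)) :=
    Fl.prod Finset.univ _ _ fun i _ => Fl_cbinom_floor i (j i)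
  have := hcb.mul (Fl.of_per (d := 0) hper)
  exact this.mono_deg (by have := (mem_multiIdx.mp hj).2; omega)

lemma ZnPeriodic.addp {p q : (Fin n → ℝ) → ℂ} (hp : ZnPeriodic p) (hq : ZnPeriodic q) :
    ZnPeriodic (fun x => p x + q x) := fun x g => by simp only [hp x g, hq x g]

lemma Fl.to_form {N : ℕ} {w : (Fin n → ℝ) → ℂ} (hw : Fl n N w) :
    ∃ p : (Fin n → ℕ) → (Fin n → ℝ) → ℂ, (∀ j, ZnPeriodic (p j)) ∧
      ∀ x, w x = ∑ j ∈ multiIdx n N, (∏ i, (x i : ℂ) ^ j i) * p j x := by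
  classical
  induction hw with
  | mono j p hj hp =>
      refine ⟨fun j' => if j' = j then p else fun _ => 0, fun j' => ?_, fun x => ?_⟩
      · show ZnPeriodic (if j' = j then p else fun _ => 0)
        split
        · exact hp
        · exact fun _ _ => rfl
      · simp only
        rw [Finset.sum_eq_single j]
        · rw [if_pos rfl]
        · intro j' _ hne
          rw [if_neg hne]
          simp
        · intro habs
          exact absurd (mem_multiIdx_of_sum hj) habs
  | zero =>
      exact ⟨fun _ _ => 0, fun _ _ _ => rfl, fun x => by simp⟩
  | add w1 w2 h1 h2 ih1 ih2 =>
      obtain ⟨p1, hp1, hv1⟩ := ih1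
      obtain ⟨p2, hp2, hv2⟩ := ih2
      refine ⟨fun j x => p1 j x + p2 j x, fun j => ZnPeriodic.addp (hp1 j) (hp2 j), fun x => ?_⟩
      show w1 x + w2 x = _
      rw [hv1 x, hv2 x, ← Finset.sum_add_distrib]
      exact Finset.sum_congr rfl fun j _ => by ring

lemma Fl.of_form {N : ℕ} {w : (Fin n → ℝ) → ℂ}
    (h : ∃ p : (Fin n → ℕ) → (Fin n → ℝ) → ℂ, (∀ j, ZnPeriodic (p j)) ∧
      ∀ x, w x = ∑ j ∈ multiIdx n N, (∏ i, (x i : ℂ) ^ j i) * p j x) :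
    Fl n N w := by
  obtain ⟨p, hper, hval⟩ := h
  exact (Fl.sum (multiIdx n N) (fun j x => (∏ i, (x i : ℂ) ^ j i) * p j x) N
    (fun j hj => Fl.mono N j (p j) (mem_multiIdx.mp hj).2 (hper j))).ext
    fun x => (hval x).symm

/-- twisted reduction -/
lemma tw_red (k : Fin n → ℂ) (gs : List (Fin n → ℤ)) (w : (Fin n → ℝ) → ℂ) :
    twDiffIter k gs (fun x => Complex.exp (Complex.I * ∑ i, k i * (x i : ℂ)) * w x)
    = fun x => Complex.exp (Complex.I * ∑ i, k i * (x i : ℂ)) * pdIter gs w x := by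
  induction gs with
  | nil => rfl
  | cons g gs ih =>
      show twDiff k g (twDiffIter k gs _) = _
      rw [ih]
      funext x
      show Complex.exp (-Complex.I * ∑ i, k i * (g i : ℂ)) *
          (Complex.exp (Complex.I * ∑ i, k i * (((x + fun i => ((g i : ℤ) : ℝ)) i : ℝ) : ℂ))
            * pdIter gs w (x + fun i => ((g i : ℤ) : ℝ)))
        - Complex.exp (Complex.I * ∑ i, k i * (x i : ℂ)) * pdIter gs w x
        = Complex.exp (Complex.I * ∑ i, k i * (x i : ℂ)) *
            (pdIter gs w (x + shift g) - pdIter gs w x)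
      have hsum : (∑ i, k i * (((x + fun i => ((g i : ℤ) : ℝ)) i : ℝ) : ℂ))
          = (∑ i, k i * (x i : ℂ)) + ∑ i, k i * (g i : ℂ) := by
        rw [← Finset.sum_add_distrib]
        refine Finset.sum_congr rfl fun i _ => ?_
        show k i * (((x i + (g i : ℝ) : ℝ)) : ℂ) = _
        push_cast
        ring
      rw [hsum, mul_add, Complex.exp_add]
      have hAB : Complex.exp (-Complex.I * ∑ i, k i * (g i : ℂ))
          * Complex.exp (Complex.I * ∑ i, k i * (g i : ℂ)) = 1 := by
        rw [← Complex.exp_add]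
        ring_nf
        exact Complex.exp_zero
      have hpt : (x + fun i => ((g i : ℤ) : ℝ)) = x + shift g := rfl
      rw [hpt]
      linear_combination (Complex.exp (Complex.I * ∑ i, k i * (x i : ℂ))
        * pdIter gs w (x + shift g)) * hAB

lemma exp_inv_mul (k : Fin n → ℂ) (u : (Fin n → ℝ) → ℂ) (x : Fin n → ℝ) :
    Complex.exp (Complex.I * ∑ i, k i * (x i : ℂ)) *
      (Complex.exp (-(Complex.I * ∑ i, k i * (x i : ℂ))) * u x) = u x := by
  rw [← mul_assoc, ← Complex.exp_add]
  ring_nf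
  rw [Complex.exp_zero, one_mul]

lemma tw_iff (k : Fin n → ℂ) (gs : List (Fin n → ℤ)) (u : (Fin n → ℝ) → ℂ) :
    twDiffIter k gs u = 0 ↔
      pdIter gs (fun x => Complex.exp (-(Complex.I * ∑ i, k i * (x i : ℂ))) * u x) = 0 := by
  set w : (Fin n → ℝ) → ℂ := fun x => Complex.exp (-(Complex.I * ∑ i, k i * (x i : ℂ))) * u x
    with hw
  have hu : u = fun x => Complex.exp (Complex.I * ∑ i, k i * (x i : ℂ)) * w x := by
    funext x
    rw [hw]
    exact (exp_inv_mul k u x).symm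
  constructor
  · intro h
    funext x
    have h' : twDiffIter k gs
        (fun x => Complex.exp (Complex.I * ∑ i, k i * (x i : ℂ)) * w x) = 0 := by
      rw [← hu]; exact h
    have := congrFun h' x
    rw [congrFun (tw_red k gs w) x] at this
    simp only [Pi.zero_apply] at this
    rcases mul_eq_zero.mp this with h0 | h0
    · exact absurd h0 (Complex.exp_ne_zero _)
    · exact h0
  · intro h
    rw [hu]
    rw [tw_red k gs w, h]
    funext x
    simp

end FloquetAux


namespace FloquetAux
variable {n : ℕ}

lemma isFloquet_iff (N : ℕ) (k : Fin n → ℂ) (u : (Fin n → ℝ) → ℂ) :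
    IsFloquet N k u ↔
      Fl n N (fun x => Complex.exp (-(Complex.I * ∑ i, k i * (x i : ℂ))) * u x) := by
  set w : (Fin n → ℝ) → ℂ := fun x => Complex.exp (-(Complex.I * ∑ i, k i * (x i : ℂ))) * u x
    with hw
  have hwx : ∀ x S, w x = S ↔ u x = Complex.exp (Complex.I * ∑ i, k i * (x i : ℂ)) * S := by
    intro x S
    constructor
    · intro h
      rw [← h, hw]
      exact (exp_inv_mul k u x).symm
    · intro h
      rw [hw]
      simp only
      rw [h, ← mul_assoc, ← Complex.exp_add]
      ring_nf
      rw [Complex.exp_zero, one_mul]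
  constructor
  · rintro ⟨p, hper, hval⟩
    refine Fl.of_form ⟨p, hper, fun x => ?_⟩
    exact (hwx x _).mpr (hval x)
  · intro hFl
    obtain ⟨p, hper, hval⟩ := hFl.to_form
    exact ⟨p, hper, fun x => (hwx x _).mp (hval x)⟩

end FloquetAux


open FloquetAux in
theorem floquet_iff_iterated_differences (n N : ℕ) (hn : 1 ≤ n) (k : Fin n → ℂ)
    (u : (Fin n → ℝ) → ℂ) :
    (IsFloquet N k u ↔
      ∀ gs : Fin (N + 1) → Fin n → ℤ, twDiffIter k (List.ofFn gs) u = 0) ∧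
    ((∀ gs : Fin (N + 1) → Fin n → ℤ, twDiffIter k (List.ofFn gs) u = 0) ↔
      ∀ ms : Fin (N + 1) → Fin n,
        twDiffIter k (List.ofFn fun t => stdBasis (ms t)) u = 0) := by

  classical
  set w : (Fin n → ℝ) → ℂ := fun x => Complex.exp (-(Complex.I * ∑ i, k i * (x i : ℂ))) * u x
    with hw
  -- (Fl → all iterated differences of length N+1 vanish, twisted form)
  have hFl_to_all : Fl n N w → ∀ gs : Fin (N + 1) → Fin n → ℤ,
      twDiffIter k (List.ofFn gs) u = 0 := by
    intro hFl gs
    rw [tw_iff]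
    exact hFl.kill (List.ofFn gs) (by simp)
  -- (basis hypothesis → Fl)
  have hbasis_to_Fl : (∀ ms : Fin (N + 1) → Fin n,
      twDiffIter k (List.ofFn fun t => stdBasis (ms t)) u = 0) → Fl n N w := by
    intro h3
    refine Fl.of_basis_kill fun l hl => ?_
    have hms := h3 (fun t => l.get (Fin.cast hl.symm t))
    rw [tw_iff] at hms
    have hlist : (List.ofFn fun t : Fin (N + 1) => stdBasis (l.get (Fin.cast hl.symm t)))
        = l.map stdBasis := by
      refine List.ext_getElem (by simp [hl]) fun i h1 h2 => ?_
      rw [List.getElem_ofFn, List.getElem_map]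
      congr 1
    rw [hlist] at hms
    exact hms
  have h23 : (∀ gs : Fin (N + 1) → Fin n → ℤ, twDiffIter k (List.ofFn gs) u = 0) →
      ∀ ms : Fin (N + 1) → Fin n,
        twDiffIter k (List.ofFn fun t => stdBasis (ms t)) u = 0 :=
    fun h2 ms => h2 fun t => stdBasis (ms t)
  constructor
  · constructor
    · intro h1
      exact hFl_to_all ((isFloquet_iff N k u).mp h1)
    · intro h2
      exact (isFloquet_iff N k u).mpr (hbasis_to_Fl (h23 h2))
  · constructor
    · exact h23
    · intro h3
      exact hFl_to_all (hbasis_to_Fl h3)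
end

section
/- Let n ≥ 1 and let Q be a nonzero homogeneous polynomial of degree 2 in n variables over ℂ (a nonzero, possibly degenerate, quadratic form). Then for every N ≥ 0 the space of polynomials p in n variables over ℂ of total degree at most N satisfying Q(D)p = 0 has dimension C(n+N, N) − C(n+N−2, N−2), where the second binomial coefficient is taken to be 0 when N < 2. -/
open BigOperators

/-- The iterated partial derivative `∂^α` on `MvPolynomial (Fin n) ℂ`. -/
noncomputable def multiDeriv {n : ℕ} (α : Fin n →₀ ℕ) :
    MvPolynomial (Fin n) ℂ →ₗ[ℂ] MvPolynomial (Fin n) ℂ :=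
  (List.ofFn fun i : Fin n => (MvPolynomial.pderiv i).toLinearMap ^ α i).prod

/-- The constant-coefficient differential operator `Q(D) = ∑_α c_α ∂^α` associated with
the polynomial `Q = ∑_α c_α x^α`, applied to `p`. -/
noncomputable def applyD {n : ℕ} (Q p : MvPolynomial (Fin n) ℂ) : MvPolynomial (Fin n) ℂ :=
  ∑ α ∈ Q.support, Q.coeff α • multiDeriv α p

namespace QHarm
open MvPolynomial
variable {n : ℕ}

lemma nat_descFactorial_succ' (m k : ℕ) :
    m.descFactorial (k+1) = m * (m-1).descFactorial k := by
  cases m with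
  | zero => simp
  | succ j => rw [Nat.succ_descFactorial_succ]; simp

lemma pow_pderiv_monomial (i : Fin n) (k : ℕ) (γ : Fin n →₀ ℕ) (c : ℂ) :
    ((MvPolynomial.pderiv i).toLinearMap ^ k) (MvPolynomial.monomial γ c)
      = MvPolynomial.monomial (γ - Finsupp.single i k) (c * ((γ i).descFactorial k : ℂ)) := by
  induction k generalizing γ c with
  | zero => simp
  | succ k ih =>
      rw [pow_succ, Module.End.mul_apply]
      rw [show ((MvPolynomial.pderiv (R:=ℂ) i).toLinearMap (MvPolynomial.monomial γ c)) = MvPolynomial.pderiv i (MvPolynomial.monomial γ c) from rfl, pderiv_monomial]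
      rw [ih]
      congr 1
      · rw [tsub_tsub, ← Finsupp.single_add, add_comm 1 k]
      · have h1 : ((γ - Finsupp.single i 1 : Fin n →₀ ℕ)) i = γ i - 1 := by
          rw [Finsupp.tsub_apply, Finsupp.single_eq_same]
        rw [h1, nat_descFactorial_succ' (γ i) k]
        push_cast
        ring

lemma list_prod_apply_monomial (β γ : Fin n →₀ ℕ) (c : ℂ) :
    ∀ (L : List (Fin n)), L.Nodup →
    (L.map fun i => (MvPolynomial.pderiv i).toLinearMap ^ β i).prod (MvPolynomial.monomial γ c)
      = MvPolynomial.monomial (γ - (L.map fun i => Finsupp.single i (β i)).sum)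
          (c * (L.map fun i => ((γ i).descFactorial (β i) : ℂ)).prod) := by
  intro L
  induction L with
  | nil => intro _; simp
  | cons j L ih =>
      intro hnd
      have hj : j ∉ L := (List.nodup_cons.mp hnd).1
      have hL : L.Nodup := (List.nodup_cons.mp hnd).2
      simp only [List.map_cons, List.prod_cons, List.sum_cons, Module.End.mul_apply]
      rw [ih hL, pow_pderiv_monomial]
      have hS : ((L.map fun i => Finsupp.single i (β i)).sum : Fin n →₀ ℕ) j = 0 := by
        rw [← Finsupp.applyAddHom_apply, map_list_sum]
        apply List.sum_eq_zero
        intro x hx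
        rw [List.map_map, List.mem_map] at hx
        obtain ⟨i, hi, rfl⟩ := hx
        exact Finsupp.single_eq_of_ne (fun h => hj (h ▸ hi))
      congr 1
      · rw [tsub_tsub, add_comm]
      · have : ((γ - (L.map fun i => Finsupp.single i (β i)).sum : Fin n →₀ ℕ)) j = γ j := by
          rw [Finsupp.tsub_apply, hS, Nat.sub_zero]
        rw [this]; ring

lemma multiDeriv_monomial (β γ : Fin n →₀ ℕ) (c : ℂ) :
    multiDeriv β (MvPolynomial.monomial γ c)
      = MvPolynomial.monomial (γ - β)
          (c * ∏ i : Fin n, ((γ i).descFactorial (β i) : ℂ)) := by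
  rw [multiDeriv, List.ofFn_eq_map, list_prod_apply_monomial β γ c _ (List.nodup_finRange n)]
  have hsum : ((List.finRange n).map fun i => Finsupp.single i (β i)).sum = β := by
    rw [show ((List.finRange n).map fun i => Finsupp.single i (β i)).sum
        = ∑ i : Fin n, Finsupp.single i (β i) from (Fin.sum_univ_def _).symm]
    exact Finsupp.univ_sum_single β
  rw [hsum, Fin.prod_univ_def]

noncomputable def Dop (Q : MvPolynomial (Fin n) ℂ) :
    MvPolynomial (Fin n) ℂ →ₗ[ℂ] MvPolynomial (Fin n) ℂ :=
  ∑ β ∈ Q.support, Q.coeff β • multiDeriv β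

lemma applyD_eq (Q p : MvPolynomial (Fin n) ℂ) : applyD Q p = Dop Q p := by
  rw [applyD, Dop, LinearMap.sum_apply]
  simp [LinearMap.smul_apply]

-- degree of an exponent in the support
lemma sum_le_totalDegree {p : MvPolynomial (Fin n) ℂ} {γ : Fin n →₀ ℕ}
    (h : γ ∈ p.support) : ∑ i : Fin n, γ i ≤ p.totalDegree := by
  have := MvPolynomial.le_totalDegree h
  rwa [Finsupp.sum_fintype _ _ (fun _ => rfl)] at this

lemma isHomog_support_sum {Q : MvPolynomial (Fin n) ℂ} {m : ℕ} (h : Q.IsHomogeneous m)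
    {β : Fin n →₀ ℕ} (hβ : β ∈ Q.support) : ∑ i : Fin n, β i = m := by
  have := h (MvPolynomial.mem_support_iff.mp hβ)
  rw [← this, Finsupp.weight_apply, Finsupp.sum_fintype _ _ (fun _ => by simp)]
  simp [Finsupp.sum_fintype]

lemma multiDeriv_monomial_zero {β γ : Fin n →₀ ℕ} (c : ℂ)
    (h : ¬ β ≤ γ) : multiDeriv β (MvPolynomial.monomial γ c) = 0 := by
  rw [multiDeriv_monomial]
  obtain ⟨i, hi⟩ : ∃ i, γ i < β i := by
    by_contra hc
    push_neg at hc
    exact h (Finsupp.le_def.mpr fun i => hc i)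
  have : ((γ i).descFactorial (β i) : ℂ) = 0 := by
    rw [Nat.descFactorial_eq_zero_iff_lt.mpr hi]; simp
  rw [Finset.prod_eq_zero (Finset.mem_univ i) this, mul_zero, map_zero]

lemma multiDeriv_monomial_mem {β γ : Fin n →₀ ℕ} (c : ℂ) {N m : ℕ}
    (hβ : ∑ i : Fin n, β i = m) (hγ : ∑ i : Fin n, γ i ≤ N) :
    multiDeriv β (MvPolynomial.monomial γ c) ∈
      MvPolynomial.restrictTotalDegree (Fin n) ℂ (N - m) := by
  by_cases hle : β ≤ γ
  · rw [multiDeriv_monomial, MvPolynomial.mem_restrictTotalDegree]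
    refine le_trans (MvPolynomial.totalDegree_monomial_le _ _) ?_
    have : (γ - β).sum (fun _ => id) = ∑ i : Fin n, (γ i - β i) := by
      rw [Finsupp.sum_fintype _ _ (fun _ => rfl)]
      exact Finset.sum_congr rfl fun i _ => by rw [Finsupp.tsub_apply]; rfl
    rw [this]
    have h2 : ∑ i : Fin n, (γ i - β i) = (∑ i : Fin n, γ i) - ∑ i : Fin n, β i :=
      Finset.sum_tsub_distrib Finset.univ (fun i _ => Finsupp.le_def.mp hle i)
    rw [h2, hβ]
    omega
  · rw [multiDeriv_monomial_zero c hle]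
    exact Submodule.zero_mem _

lemma Dop_mem {Q : MvPolynomial (Fin n) ℂ} (hhom : Q.IsHomogeneous 2)
    {p : MvPolynomial (Fin n) ℂ} {N : ℕ} (hp : p.totalDegree ≤ N) :
    Dop Q p ∈ MvPolynomial.restrictTotalDegree (Fin n) ℂ (N - 2) := by
  rw [Dop, LinearMap.sum_apply]
  refine Submodule.sum_mem _ fun β hβ => ?_
  rw [LinearMap.smul_apply]
  refine Submodule.smul_mem _ _ ?_
  rw [p.as_sum, map_sum]
  refine Submodule.sum_mem _ fun γ hγ => ?_
  exact multiDeriv_monomial_mem _ (isHomog_support_sum hhom hβ)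
    ((sum_le_totalDegree hγ).trans hp)

lemma Dop_eq_zero {Q : MvPolynomial (Fin n) ℂ} (hhom : Q.IsHomogeneous 2)
    {p : MvPolynomial (Fin n) ℂ} (hp : p.totalDegree ≤ 1) : Dop Q p = 0 := by
  rw [Dop, LinearMap.sum_apply]
  refine Finset.sum_eq_zero fun β hβ => ?_
  rw [LinearMap.smul_apply]
  rw [p.as_sum, map_sum]
  have : ∀ γ ∈ p.support, multiDeriv β (MvPolynomial.monomial γ (p.coeff γ)) = 0 := by
    intro γ hγ
    refine multiDeriv_monomial_zero _ fun hle => ?_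
    have h1 : ∑ i : Fin n, β i ≤ ∑ i : Fin n, γ i :=
      Finset.sum_le_sum fun i _ => Finsupp.le_def.mp hle i
    have h2 := (sum_le_totalDegree hγ).trans hp
    rw [isHomog_support_sum hhom hβ] at h1
    omega
  rw [Finset.sum_congr rfl this]
  simp

noncomputable def ffact (α : Fin n →₀ ℕ) : ℂ := ∏ i : Fin n, ((α i).factorial : ℂ)

lemma ffact_ne_zero (α : Fin n →₀ ℕ) : ffact α ≠ 0 := by
  rw [ffact]
  refine Finset.prod_ne_zero_iff.mpr fun i _ => ?_
  exact_mod_cast (Nat.factorial_pos _).ne'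

noncomputable def Bform (u v : MvPolynomial (Fin n) ℂ) : ℂ :=
  ∑ α ∈ u.support, ffact α * u.coeff α * v.coeff α

lemma Bform_eq_sum_subset (u v : MvPolynomial (Fin n) ℂ) {t : Finset (Fin n →₀ ℕ)}
    (h : u.support ⊆ t) :
    Bform u v = ∑ α ∈ t, ffact α * u.coeff α * v.coeff α := by
  rw [Bform]
  refine Finset.sum_subset h fun α _ hα => ?_
  rw [MvPolynomial.notMem_support_iff.mp hα]
  ring

lemma Bform_add_left (u u' v : MvPolynomial (Fin n) ℂ) :
    Bform (u + u') v = Bform u v + Bform u' v := by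
  have h1 : (u + u').support ⊆ u.support ∪ u'.support := MvPolynomial.support_add
  rw [Bform_eq_sum_subset (u+u') v h1, Bform_eq_sum_subset u v Finset.subset_union_left,
    Bform_eq_sum_subset u' v (t := u.support ∪ u'.support) Finset.subset_union_right,
    ← Finset.sum_add_distrib]
  refine Finset.sum_congr rfl fun α _ => ?_
  rw [MvPolynomial.coeff_add]
  ring

lemma Bform_smul_left (c : ℂ) (u v : MvPolynomial (Fin n) ℂ) :
    Bform (c • u) v = c * Bform u v := by
  rw [Bform_eq_sum_subset (c • u) v (MvPolynomial.support_smul),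
    Bform, Finset.mul_sum]
  refine Finset.sum_congr rfl fun α _ => ?_
  rw [MvPolynomial.coeff_smul]
  simp only [smul_eq_mul]
  ring

lemma Bform_add_right (u v v' : MvPolynomial (Fin n) ℂ) :
    Bform u (v + v') = Bform u v + Bform u v' := by
  rw [Bform, Bform, Bform, ← Finset.sum_add_distrib]
  refine Finset.sum_congr rfl fun α _ => ?_
  rw [MvPolynomial.coeff_add]
  ring

lemma Bform_smul_right (c : ℂ) (u v : MvPolynomial (Fin n) ℂ) :
    Bform u (c • v) = c * Bform u v := by
  rw [Bform, Bform, Finset.mul_sum]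
  refine Finset.sum_congr rfl fun α _ => ?_
  rw [MvPolynomial.coeff_smul]
  simp only [smul_eq_mul]
  ring

lemma Bform_monomial_left (σ : Fin n →₀ ℕ) (c : ℂ) (v : MvPolynomial (Fin n) ℂ) :
    Bform (MvPolynomial.monomial σ c) v = ffact σ * c * v.coeff σ := by
  by_cases hc : c = 0
  · subst hc; simp [Bform]
  · rw [Bform, MvPolynomial.support_monomial, if_neg hc, Finset.sum_singleton,
      MvPolynomial.coeff_monomial, if_pos rfl]

lemma Bform_monomial_right (u : MvPolynomial (Fin n) ℂ) (π : Fin n →₀ ℕ) (d : ℂ) :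
    Bform u (MvPolynomial.monomial π d) = ffact π * u.coeff π * d := by
  rw [Bform]
  rw [Finset.sum_eq_single π]
  · rw [MvPolynomial.coeff_monomial, if_pos rfl]
  · intro β _ hβ
    rw [MvPolynomial.coeff_monomial, if_neg (fun h => hβ h.symm), mul_zero]
  · intro hπ
    rw [MvPolynomial.notMem_support_iff.mp hπ]
    ring

lemma descprod_mul_ffact {σ π : Fin n →₀ ℕ} (h : σ ≤ π) :
    ffact σ * ∏ i : Fin n, ((π i).descFactorial ((π - σ : Fin n →₀ ℕ) i) : ℂ) = ffact π := by
  rw [ffact, ffact, ← Finset.prod_mul_distrib]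
  refine Finset.prod_congr rfl fun i _ => ?_
  rw [Finsupp.tsub_apply]
  have hi : σ i ≤ π i := Finsupp.le_def.mp h i
  have key := Nat.factorial_mul_descFactorial (n := π i) (k := π i - σ i) (by omega)
  rw [show π i - (π i - σ i) = σ i by omega] at key
  exact_mod_cast key

lemma B_adjoint_mono (Q : MvPolynomial (Fin n) ℂ) (σ π : Fin n →₀ ℕ) (c d : ℂ) :
    Bform (MvPolynomial.monomial σ c) (Dop Q (MvPolynomial.monomial π d))
      = Bform (Q * MvPolynomial.monomial σ c) (MvPolynomial.monomial π d) := by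
  rw [Bform_monomial_left, Bform_monomial_right, MvPolynomial.coeff_mul_monomial']
  have hD : (Dop Q (MvPolynomial.monomial π d)).coeff σ
      = ∑ β ∈ Q.support, Q.coeff β *
          (if π - β = σ then d * ∏ i : Fin n, ((π i).descFactorial (β i) : ℂ) else 0) := by
    rw [Dop, LinearMap.sum_apply, MvPolynomial.coeff_sum]
    refine Finset.sum_congr rfl fun β _ => ?_
    rw [LinearMap.smul_apply, MvPolynomial.coeff_smul, multiDeriv_monomial,
      MvPolynomial.coeff_monomial]
    simp only [smul_eq_mul]
    try (split_ifs <;> first | rfl | ring)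
  rw [hD]
  by_cases hσπ : σ ≤ π
  · rw [if_pos hσπ]
    rw [Finset.sum_eq_single (π - σ)]
    · have hre : π - (π - σ) = σ := by
        ext i
        have := Finsupp.le_def.mp hσπ i
        simp only [Finsupp.tsub_apply]
        omega
      rw [if_pos hre, ← descprod_mul_ffact hσπ]
      ring
    · intro β hβ hne
      split_ifs with heq
      · by_cases hle : β ≤ π
        · exfalso
          apply hne
          ext i
          have h1 := Finsupp.le_def.mp hle i
          have h2 : (π - β : Fin n →₀ ℕ) i = σ i := by rw [heq]
          rw [Finsupp.tsub_apply] at h2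
          simp only [Finsupp.tsub_apply]
          omega
        · obtain ⟨i, hi⟩ : ∃ i, π i < β i := by
            by_contra hc
            push_neg at hc
            exact hle (Finsupp.le_def.mpr fun i => hc i)
          have hz : ((π i).descFactorial (β i) : ℂ) = 0 := by
            rw [Nat.descFactorial_eq_zero_iff_lt.mpr hi]; simp
          rw [Finset.prod_eq_zero (Finset.mem_univ i) hz]
          ring
      · rw [mul_zero]
    · intro hns
      rw [MvPolynomial.notMem_support_iff.mp hns]
      ring
  · rw [if_neg hσπ]
    have hz : ∀ β ∈ Q.support, Q.coeff β *
        (if π - β = σ then d * ∏ i : Fin n, ((π i).descFactorial (β i) : ℂ) else 0) = 0 := by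
      intro β _
      split_ifs with heq
      · exact absurd (heq ▸ (tsub_le_self : π - β ≤ π)) hσπ
      · rw [mul_zero]
    rw [Finset.sum_eq_zero hz]
    ring

lemma B_adjoint (Q s p : MvPolynomial (Fin n) ℂ) :
    Bform s (Dop Q p) = Bform (Q * s) p := by
  induction s using MvPolynomial.induction_on' with
  | add s₁ s₂ ih₁ ih₂ =>
      rw [Bform_add_left, ih₁, ih₂, mul_add, Bform_add_left]
  | monomial σ c =>
      induction p using MvPolynomial.induction_on' with
      | add p₁ p₂ ih₁ ih₂ =>
          rw [map_add, Bform_add_right, ih₁, ih₂, Bform_add_right]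
      | monomial π d => exact B_adjoint_mono Q σ π c d

lemma Bform_self_ne_zero {s : MvPolynomial (Fin n) ℂ} {k : ℕ}
    (hs : s.totalDegree ≤ k) (hne : s ≠ 0)  :
    ∃ q ∈ MvPolynomial.restrictTotalDegree (Fin n) ℂ k, Bform s q ≠ 0 := by
  obtain ⟨α, hα⟩ := (MvPolynomial.support_nonempty.mpr hne)
  refine ⟨MvPolynomial.monomial α 1, ?_, ?_⟩
  · rw [MvPolynomial.mem_restrictTotalDegree]
    exact le_trans (MvPolynomial.totalDegree_monomial_le _ _)
      (le_trans (MvPolynomial.le_totalDegree hα) hs)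
  · rw [Bform_monomial_right, mul_one]
    exact mul_ne_zero (ffact_ne_zero α) (MvPolynomial.mem_support_iff.mp hα)

-- cardinality of the basis of restrictTotalDegree
lemma card_sum_le (n N : ℕ) :
    Nat.card {d : Fin n →₀ ℕ // (d.sum fun _ e => e) ≤ N} = (n + N).choose N := by
  have e1 : {d : Fin n →₀ ℕ // (d.sum fun _ e => e) ≤ N}
      ≃ {t : Fin (n+1) →₀ ℕ // (t.sum fun _ e => e) = N} := by
    have hsum : ∀ (t : Fin (n+1) →₀ ℕ), (t.sum fun _ e => e) = ∑ i, t i :=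
      fun t => Finsupp.sum_fintype _ _ (fun _ => rfl)
    have hsum' : ∀ (d : Fin n →₀ ℕ), (d.sum fun _ e => e) = ∑ i, d i :=
      fun d => Finsupp.sum_fintype _ _ (fun _ => rfl)
    refine
      { toFun := fun d => ⟨Finsupp.cons (N - (d.1.sum fun _ e => e)) d.1, ?_⟩
        invFun := fun t => ⟨Finsupp.tail t.1, ?_⟩
        left_inv := ?_, right_inv := ?_ }
    · rw [hsum, Fin.sum_univ_succ]
      simp only [Finsupp.cons_zero, Finsupp.cons_succ]
      rw [← hsum' d.1]
      have := d.2
      omega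
    · have ht := t.2
      rw [hsum, Fin.sum_univ_succ] at ht
      rw [hsum']
      have : ∀ i, Finsupp.tail t.1 i = t.1 i.succ := fun i => rfl
      calc (∑ i, Finsupp.tail t.1 i) = ∑ i : Fin n, t.1 i.succ := by
            exact Finset.sum_congr rfl fun i _ => this i
        _ ≤ N := by omega
    · intro d
      ext : 1
      exact Finsupp.tail_cons _ _
    · intro t
      ext : 1
      have ht := t.2
      rw [hsum, Fin.sum_univ_succ] at ht
      have htail : (Finsupp.tail t.1).sum (fun _ e => e) = ∑ i : Fin n, t.1 i.succ := by
        rw [hsum']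
        rfl
      show Finsupp.cons (N - ((Finsupp.tail t.1).sum fun _ e => e)) (Finsupp.tail t.1) = t.1
      rw [htail, show N - (∑ i : Fin n, t.1 i.succ) = t.1 0 by omega]
      exact Finsupp.cons_tail _
  have e2 : {t : Fin (n+1) →₀ ℕ // (t.sum fun _ e => e) = N}
      ≃ Sym (Fin (n+1)) N := by
    refine (Finsupp.orderIsoMultiset (ι := Fin (n+1))).toEquiv.subtypeEquiv fun t => ?_
    simp only [RelIso.coe_fn_toEquiv, Finsupp.coe_orderIsoMultiset]
    rw [Finsupp.card_toMultiset]
    exact Iff.rfl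
  rw [Nat.card_congr (e1.trans e2), Nat.card_eq_fintype_card, Sym.card_sym_eq_choose]
  simp [Fintype.card_fin]

lemma finrank_restrictTotalDegree (n N : ℕ) :
    Module.finrank ℂ (MvPolynomial.restrictTotalDegree (Fin n) ℂ N) = (n + N).choose N := by
  have b := MvPolynomial.basisRestrictSupport ℂ { d : Fin n →₀ ℕ | (d.sum fun _ e => e) ≤ N }
  have : Module.finrank ℂ (MvPolynomial.restrictTotalDegree (Fin n) ℂ N)
      = Nat.card { d : Fin n →₀ ℕ | (d.sum fun _ e => e) ≤ N } := by
    haveI : Finite { d : Fin n →₀ ℕ | (d.sum fun _ e => e) ≤ N } := by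
      refine Nat.finite_of_card_ne_zero ?_
      rw [show Nat.card { d : Fin n →₀ ℕ | (d.sum fun _ e => e) ≤ N }
          = Nat.card {d : Fin n →₀ ℕ // (d.sum fun _ e => e) ≤ N} from rfl, card_sum_le]
      exact (Nat.choose_pos (by omega)).ne'
    haveI : Fintype { d : Fin n →₀ ℕ | (d.sum fun _ e => e) ≤ N } := Fintype.ofFinite _
    have hdef : MvPolynomial.restrictTotalDegree (Fin n) ℂ N
        = MvPolynomial.restrictSupport ℂ { d : Fin n →₀ ℕ | (d.sum fun _ e => e) ≤ N } := rfl
    rw [hdef, Module.finrank_eq_card_basis b, Nat.card_eq_fintype_card]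
  rw [this]
  exact card_sum_le n N

variable (Q : MvPolynomial (Fin n) ℂ)

lemma Lres_mapsTo (hhom : Q.IsHomogeneous 2) (M : ℕ) :
    ∀ p ∈ MvPolynomial.restrictTotalDegree (Fin n) ℂ (M + 2),
      Dop Q p ∈ MvPolynomial.restrictTotalDegree (Fin n) ℂ M := by
  intro p hp
  have := Dop_mem hhom ((MvPolynomial.mem_restrictTotalDegree _ _ _).mp hp)
  simpa using this

lemma mul_mapsTo (hQ : Q ≠ 0) (hhom : Q.IsHomogeneous 2) (M : ℕ) :
    ∀ s ∈ MvPolynomial.restrictTotalDegree (Fin n) ℂ M,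
      (LinearMap.mulLeft ℂ Q) s ∈ MvPolynomial.restrictTotalDegree (Fin n) ℂ (M + 2) := by
  intro s hs
  rw [MvPolynomial.mem_restrictTotalDegree] at hs ⊢
  refine le_trans (MvPolynomial.totalDegree_mul _ _) ?_
  rw [hhom.totalDegree hQ]
  omega

noncomputable def Bmap (k : ℕ) :
    (MvPolynomial.restrictTotalDegree (Fin n) ℂ k) →ₗ[ℂ]
      Module.Dual ℂ (MvPolynomial.restrictTotalDegree (Fin n) ℂ k) :=
  LinearMap.mk₂ ℂ (fun s q => Bform s.1 q.1)
    (fun s s' q => by simpa using Bform_add_left s.1 s'.1 q.1)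
    (fun c s q => by simpa using Bform_smul_left c s.1 q.1)
    (fun s q q' => by simpa using Bform_add_right s.1 q.1 q'.1)
    (fun c s q => by simpa using Bform_smul_right c s.1 q.1)

lemma Bmap_injective (k : ℕ) : Function.Injective (Bmap (n := n) k) := by
  rw [← LinearMap.ker_eq_bot, Submodule.eq_bot_iff]
  intro s hs
  rw [LinearMap.mem_ker] at hs
  by_contra hne
  have hsne : (s : MvPolynomial (Fin n) ℂ) ≠ 0 := fun h => hne (Subtype.ext h)
  obtain ⟨q, hq, hBq⟩ := Bform_self_ne_zero
    ((MvPolynomial.mem_restrictTotalDegree _ _ _).mp s.2) hsne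
  apply hBq
  have := congrFun (congrArg (fun f => f.toFun) hs) ⟨q, hq⟩
  simpa [Bmap] using this

lemma Bmap_surjective (k : ℕ) : Function.Surjective (Bmap (n := n) k) := by
  rw [← LinearMap.injective_iff_surjective_of_finrank_eq_finrank
    Subspace.dual_finrank_eq.symm]
  exact Bmap_injective k

lemma Lres_surjective (hQ : Q ≠ 0) (hhom : Q.IsHomogeneous 2) (M : ℕ) :
    Function.Surjective ((Dop Q).restrict (Lres_mapsTo Q hhom M)) := by
  set W2 := MvPolynomial.restrictTotalDegree (Fin n) ℂ (M + 2)
  set W0 := MvPolynomial.restrictTotalDegree (Fin n) ℂ M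
  set L := (Dop Q).restrict (Lres_mapsTo Q hhom M)
  set Mul := (LinearMap.mulLeft ℂ Q).restrict (mul_mapsTo Q hQ hhom M)
  have hMul_inj : Function.Injective Mul := by
    intro s s' h
    have h1 : Q * (s : MvPolynomial (Fin n) ℂ) = Q * (s' : MvPolynomial (Fin n) ℂ) := by
      have := congrArg Subtype.val h
      simpa [Mul, LinearMap.restrict_coe_apply, LinearMap.mulLeft_apply] using this
    exact Subtype.ext (mul_left_cancel₀ hQ h1)
  have hdiag : ∀ s : W0, L.dualMap (Bmap M s) = Bmap (M + 2) (Mul s) := by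
    intro s
    apply LinearMap.ext
    intro p
    have hLp : ((L p : W0) : MvPolynomial (Fin n) ℂ) = Dop Q p := by
      simp [L, LinearMap.restrict_coe_apply]
    have hMs : ((Mul s : W2) : MvPolynomial (Fin n) ℂ) = Q * s := by
      simp [Mul, LinearMap.restrict_coe_apply, LinearMap.mulLeft_apply]
    show Bform (s : MvPolynomial (Fin n) ℂ) ((L p : W0) : MvPolynomial (Fin n) ℂ)
        = Bform ((Mul s : W2) : MvPolynomial (Fin n) ℂ) (p : MvPolynomial (Fin n) ℂ)
    rw [hLp, hMs]
    exact B_adjoint Q _ _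
  have hdual_inj : Function.Injective L.dualMap := by
    intro φ φ' h
    obtain ⟨s, rfl⟩ := Bmap_surjective M φ
    obtain ⟨s', rfl⟩ := Bmap_surjective M φ'
    rw [hdiag s, hdiag s'] at h
    rw [hMul_inj (Bmap_injective (M + 2) h)]
  exact LinearMap.dualMap_injective_iff.mp hdual_inj

end QHarm

open QHarm in
theorem dim_Q_harmonic_deg_two (n : ℕ) (hn : 1 ≤ n)
    (Q : MvPolynomial (Fin n) ℂ) (hQ : Q ≠ 0) (hhom : Q.IsHomogeneous 2) (N : ℕ) :
    Module.finrank ℂ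
        ↥(Submodule.span ℂ
          {p : MvPolynomial (Fin n) ℂ | p.totalDegree ≤ N ∧ applyD Q p = 0}) =
      Nat.choose (n + N) N - (if 2 ≤ N then Nat.choose (n + N - 2) (N - 2) else 0) := by
  by_cases hN : 2 ≤ N
  · obtain ⟨M, rfl⟩ : ∃ M, N = M + 2 := ⟨N - 2, by omega⟩
    set W2 := MvPolynomial.restrictTotalDegree (Fin n) ℂ (M + 2) with hW2
    set K : Submodule ℂ (MvPolynomial (Fin n) ℂ) := W2 ⊓ LinearMap.ker (Dop Q) with hK
    have hset : {p : MvPolynomial (Fin n) ℂ | p.totalDegree ≤ M + 2 ∧ applyD Q p = 0}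
        = (K : Set (MvPolynomial (Fin n) ℂ)) := by
      ext p
      simp only [Set.mem_setOf_eq, hK, SetLike.mem_coe, Submodule.mem_inf,
        LinearMap.mem_ker, applyD_eq, hW2, MvPolynomial.mem_restrictTotalDegree]
    rw [hset, Submodule.span_eq]
    set L := (Dop Q).restrict (Lres_mapsTo Q hhom M)
    have hkerL : LinearMap.ker L = Submodule.comap W2.subtype K := by
      ext x
      simp only [LinearMap.mem_ker, Submodule.mem_comap, Submodule.subtype_apply, hK,
        Submodule.mem_inf, LinearMap.mem_ker]
      constructor
      · intro h
        refine ⟨x.2, ?_⟩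
        have := congrArg Subtype.val h
        simpa [L, LinearMap.restrict_coe_apply] using this
      · intro h
        apply Subtype.ext
        simpa [L, LinearMap.restrict_coe_apply] using h.2
    have hfr : Module.finrank ℂ (LinearMap.ker L) = Module.finrank ℂ K := by
      rw [hkerL]
      exact LinearEquiv.finrank_eq (Submodule.comapSubtypeEquivOfLe inf_le_left)
    have hrank := LinearMap.finrank_range_add_finrank_ker L
    have hrange : LinearMap.range L = ⊤ :=
      LinearMap.range_eq_top.mpr (Lres_surjective Q hQ hhom M)
    rw [hrange, finrank_top] at hrank
    rw [finrank_restrictTotalDegree] at hrank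
    have hW2rank : Module.finrank ℂ W2 = (n + (M + 2)).choose (M + 2) :=
      finrank_restrictTotalDegree n (M + 2)
    rw [hW2rank] at hrank
    rw [← hfr]
    rw [if_pos hN, show n + (M + 2) - 2 = n + M by omega, show M + 2 - 2 = M by omega]
    omega
  · rw [if_neg hN]
    set W := MvPolynomial.restrictTotalDegree (Fin n) ℂ N with hW
    have hset : {p : MvPolynomial (Fin n) ℂ | p.totalDegree ≤ N ∧ applyD Q p = 0}
        = (W : Set (MvPolynomial (Fin n) ℂ)) := by
      ext p
      simp only [Set.mem_setOf_eq, SetLike.mem_coe, MvPolynomial.mem_restrictTotalDegree, hW]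
      constructor
      · exact fun h => h.1
      · intro h
        refine ⟨h, ?_⟩
        rw [applyD_eq]
        exact Dop_eq_zero hhom (h.trans (by omega))
    rw [hset, Submodule.span_eq, Nat.sub_zero]
    exact finrank_restrictTotalDegree n N
end

section
/- Let n ≥ 1, l₀ ≥ 1, and let Q be a nonzero homogeneous polynomial of degree l₀ in n variables over ℂ. Then for every N ≥ 0 the space of polynomials p in n variables over ℂ of total degree at most N satisfying Q(D)p = 0 has dimension C(n+N, N) − C(n+N−l₀, N−l₀), where the second binomial coefficient is taken to be 0 when N < l₀. -/
open MvPolynomial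

theorem pderiv_pow_monomial {n : ℕ} (j : Fin n) (k : ℕ) (β : Fin n →₀ ℕ) (c : ℂ) :
    ((pderiv j).toLinearMap ^ k) (monomial β c) =
      ((β j).descFactorial k : ℂ) • monomial (β - Finsupp.single j k) c := by
  induction k with
  | zero => simp
  | succ k ih =>
    rw [pow_succ', Module.End.mul_apply, ih, map_smul, Derivation.coeFn_coe, pderiv_monomial]
    have h1 : (β - Finsupp.single j k) j = β j - k := by simp
    have h2 : β - Finsupp.single j k - Finsupp.single j 1 = β - Finsupp.single j (k+1) := by
      rw [tsub_tsub, ← Finsupp.single_add]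
    rw [h1, h2, Nat.descFactorial_succ]
    push_cast
    simp [smul_monomial]
    ring_nf

theorem listprod_pderiv_monomial {n : ℕ} (α : Fin n →₀ ℕ) :
    ∀ (L : List (Fin n)), L.Nodup → ∀ (β : Fin n →₀ ℕ) (c : ℂ),
      ((L.map fun i => (pderiv i).toLinearMap ^ α i).prod) (monomial β c) =
        (((L.map fun i => (β i).descFactorial (α i)).prod : ℕ) : ℂ) •
          monomial (β - (L.map fun i => Finsupp.single i (α i)).sum) c := by
  intro L
  induction L with
  | nil => intro _ β c; simp
  | cons j L ih =>
    intro hnd β c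
    have hj : j ∉ L := (List.nodup_cons.mp hnd).1
    have hL : L.Nodup := (List.nodup_cons.mp hnd).2
    rw [List.map_cons, List.prod_cons, Module.End.mul_apply, ih hL, map_smul,
      pderiv_pow_monomial]
    have hsum : ((L.map fun i => Finsupp.single i (α i)).sum) j = 0 := by
      rw [show ((L.map fun i => Finsupp.single i (α i)).sum) j
          = ((L.map fun i => Finsupp.single i (α i)).map (Finsupp.applyAddHom j)).sum from
          map_list_sum (Finsupp.applyAddHom j) _, List.map_map]
      apply List.sum_eq_zero
      intro x hx
      simp only [List.mem_map, Function.comp] at hx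
      obtain ⟨i, hi, rfl⟩ := hx
      have hne : i ≠ j := fun h => hj (h ▸ hi)
      simp [Finsupp.single_apply, hne]
    have h1 : (β - (L.map fun i => Finsupp.single i (α i)).sum) j = β j := by
      rw [Finsupp.tsub_apply, hsum, Nat.sub_zero]
    rw [h1, smul_smul, List.map_cons, List.prod_cons, List.map_cons, List.sum_cons,
      tsub_tsub, add_comm (Finsupp.single j (α j))]
    push_cast
    ring_nf

open BigOperators

theorem multiDeriv_monomial {n : ℕ} (α β : Fin n →₀ ℕ) (c : ℂ) :
    multiDeriv α (monomial β c) =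
      ((∏ i, (β i).descFactorial (α i) : ℕ) : ℂ) • monomial (β - α) c := by
  rw [multiDeriv, List.ofFn_eq_map,
    listprod_pderiv_monomial α (List.finRange n) (List.nodup_finRange n) β c]
  have h1 : ((List.finRange n).map fun i => (β i).descFactorial (α i)).prod
      = ∏ i, (β i).descFactorial (α i) := by rw [← List.ofFn_eq_map, Fin.prod_ofFn]
  have h2 : ((List.finRange n).map fun i => Finsupp.single i (α i)).sum
      = α := by rw [← List.ofFn_eq_map, Fin.sum_ofFn, Finsupp.univ_sum_single]
  rw [h1, h2]

theorem applyD_eq_sum {n : ℕ} (Q p : MvPolynomial (Fin n) ℂ) :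
    applyD Q p = Finsupp.sum (AddMonoidAlgebra.coeff Q) (fun a c => c • multiDeriv a p) := rfl

theorem applyD_add_left {n : ℕ} (P P' p : MvPolynomial (Fin n) ℂ) :
    applyD (P + P') p = applyD P p + applyD P' p := by
  rw [applyD_eq_sum, applyD_eq_sum, applyD_eq_sum, AddMonoidAlgebra.coeff_add]
  exact Finsupp.sum_add_index' (fun a => zero_smul _ _) (fun a b₁ b₂ => add_smul _ _ _)

theorem applyD_monomial_left {n : ℕ} (α : Fin n →₀ ℕ) (c : ℂ) (p : MvPolynomial (Fin n) ℂ) :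
    applyD (monomial α c) p = c • multiDeriv α p := by
  rw [applyD]
  rcases eq_or_ne c 0 with rfl | hc
  · simp
  · rw [support_monomial, if_neg hc, Finset.sum_singleton, coeff_monomial, if_pos rfl]

theorem Nat.descFactorial_add_eq (m a b : ℕ) :
    m.descFactorial (a + b) = m.descFactorial b * (m - b).descFactorial a := by
  induction a with
  | zero => simp
  | succ a ih =>
    rw [show a + 1 + b = (a + b) + 1 from by ring, Nat.descFactorial_succ, ih,
      Nat.descFactorial_succ, Nat.sub_sub, Nat.add_comm b a]
    ring

theorem multiDeriv_comp {n : ℕ} (α β : Fin n →₀ ℕ) (p : MvPolynomial (Fin n) ℂ) :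
    multiDeriv (α + β) p = multiDeriv α (multiDeriv β p) := by
  induction p using MvPolynomial.induction_on' with
  | monomial γ c =>
    rw [multiDeriv_monomial, multiDeriv_monomial, map_smul, multiDeriv_monomial, smul_smul]
    have he : γ - (α + β) = γ - β - α := by rw [tsub_tsub, add_comm]
    have hc : (∏ i, (γ i).descFactorial ((α + β) i))
        = (∏ i, (γ i).descFactorial (β i)) * ∏ i, ((γ - β) i).descFactorial (α i) := by
      rw [← Finset.prod_mul_distrib]
      apply Finset.prod_congr rfl
      intro i _
      rw [Finsupp.add_apply, Finsupp.tsub_apply, Nat.descFactorial_add_eq]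
    rw [he, hc]
    push_cast
    ring_nf
  | add p q hp hq => rw [map_add, map_add, hp, hq, map_add]

theorem applyD_add_right {n : ℕ} (Q p q : MvPolynomial (Fin n) ℂ) :
    applyD Q (p + q) = applyD Q p + applyD Q q := by
  simp [applyD, map_add, smul_add, Finset.sum_add_distrib]

theorem applyD_smul_right {n : ℕ} (Q p : MvPolynomial (Fin n) ℂ) (c : ℂ) :
    applyD Q (c • p) = c • applyD Q p := by
  simp [applyD, map_smul, Finset.smul_sum, smul_comm c]

theorem applyD_mul {n : ℕ} (P R p : MvPolynomial (Fin n) ℂ) :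
    applyD (P * R) p = applyD P (applyD R p) := by
  induction P using MvPolynomial.induction_on' with
  | monomial α c =>
    induction R using MvPolynomial.induction_on' with
    | monomial β d =>
      rw [monomial_mul, applyD_monomial_left, applyD_monomial_left, applyD_monomial_left,
        map_smul, multiDeriv_comp α β p, smul_smul]
    | add r₁ r₂ h1 h2 =>
      rw [mul_add, applyD_add_left, h1, h2, applyD_add_left, applyD_add_right]
  | add q₁ q₂ h1 h2 => rw [add_mul, applyD_add_left, h1, h2, applyD_add_left]

noncomputable def BF {n : ℕ} (p q : MvPolynomial (Fin n) ℂ) : ℂ := coeff 0 (applyD p q)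

theorem BF_monomial_monomial {n : ℕ} (α β : Fin n →₀ ℕ) (c d : ℂ) :
    BF (monomial α c) (monomial β d) =
      if α = β then c * d * ((∏ i, Nat.factorial (α i) : ℕ) : ℂ) else 0 := by
  rw [BF, applyD_monomial_left, multiDeriv_monomial, coeff_smul, coeff_smul, smul_eq_mul,
    smul_eq_mul, coeff_monomial]
  rcases eq_or_ne α β with rfl | hne
  · rw [if_pos rfl, if_pos (tsub_self α)]
    simp [Nat.descFactorial_self, mul_comm, mul_assoc, mul_left_comm]
  · rw [if_neg hne]
    rcases eq_or_ne (β - α) 0 with h | h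
    · have hle : β ≤ α := tsub_eq_zero_iff_le.mp h
      have : ∃ i, β i < α i := by
        by_contra hc
        push_neg at hc
        exact hne (le_antisymm (Finsupp.le_def.mpr hc) hle)
      obtain ⟨i, hi⟩ := this
      have : (∏ j, (β j).descFactorial (α j)) = 0 :=
        Finset.prod_eq_zero (Finset.mem_univ i)
          ((Nat.descFactorial_eq_zero_iff_lt).mpr hi)
      rw [this]
      simp
    · rw [if_neg h]
      simp

theorem BF_add_left {n : ℕ} (p p' q : MvPolynomial (Fin n) ℂ) :
    BF (p + p') q = BF p q + BF p' q := by
  rw [BF, BF, BF, applyD_add_left, coeff_add]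

theorem BF_add_right {n : ℕ} (p q q' : MvPolynomial (Fin n) ℂ) :
    BF p (q + q') = BF p q + BF p q' := by
  rw [BF, BF, BF, applyD_add_right, coeff_add]

theorem BF_comm {n : ℕ} (p q : MvPolynomial (Fin n) ℂ) : BF p q = BF q p := by
  induction p using MvPolynomial.induction_on' with
  | monomial α c =>
    induction q using MvPolynomial.induction_on' with
    | monomial β d =>
      rw [BF_monomial_monomial, BF_monomial_monomial]
      rcases eq_or_ne α β with rfl | hne
      · rw [if_pos rfl, if_pos rfl]; ring
      · rw [if_neg hne, if_neg (Ne.symm hne)]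
    | add q₁ q₂ h1 h2 => rw [BF_add_right, BF_add_left, h1, h2]
  | add p₁ p₂ h1 h2 => rw [BF_add_left, BF_add_right, h1, h2]

theorem BF_monomial_left {n : ℕ} (α : Fin n →₀ ℕ) (q : MvPolynomial (Fin n) ℂ) :
    BF (monomial α 1) q = ((∏ i, Nat.factorial (α i) : ℕ) : ℂ) * coeff α q := by
  induction q using MvPolynomial.induction_on' with
  | monomial β d =>
    rw [BF_monomial_monomial, coeff_monomial]
    rcases eq_or_ne α β with rfl | hne
    · rw [if_pos rfl, if_pos rfl]; ring
    · rw [if_neg hne, if_neg (fun h => hne h.symm), mul_zero]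
  | add q₁ q₂ h1 h2 => rw [BF_add_right, coeff_add, h1, h2, mul_add]

theorem multiDeriv_support_le {n : ℕ} (α : Fin n →₀ ℕ) (p : MvPolynomial (Fin n) ℂ)
    {β : Fin n →₀ ℕ} (hβ : β ∈ (multiDeriv α p).support) :
    (β.sum fun _ e => e) + (α.sum fun _ e => e) ≤ p.totalDegree := by
  classical
  have hp : multiDeriv α p = ∑ γ ∈ p.support,
      ((∏ i, (γ i).descFactorial (α i) : ℕ) : ℂ) • monomial (γ - α) (coeff γ p) := by
    conv_lhs => rw [p.as_sum, map_sum]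
    exact Finset.sum_congr rfl fun γ _ => multiDeriv_monomial α γ _
  rw [hp] at hβ
  have := MvPolynomial.support_sum hβ
  rw [Finset.mem_biUnion] at this
  obtain ⟨γ, hγ, hβγ⟩ := this
  set k : ℕ := ∏ i, (γ i).descFactorial (α i) with hk
  have hk0 : (k : ℂ) ≠ 0 := by
    intro h
    rw [show ((k : ℂ)) • (monomial (γ - α)) (coeff γ p) = 0 from by rw [h, zero_smul]] at hβγ
    simp at hβγ
  have hβeq : β = γ - α := by
    have h1 := Finsupp.support_smul hβγ
    have h2 : ((monomial (γ - α)) (coeff γ p)).support ⊆ {γ - α} :=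
      MvPolynomial.support_monomial_subset
    have := h2 h1
    simpa using this
  have hle : α ≤ γ := by
    intro i
    by_contra hlt
    push_neg at hlt
    have : (γ i).descFactorial (α i) = 0 := Nat.descFactorial_eq_zero_iff_lt.mpr hlt
    exact hk0 (by exact_mod_cast Finset.prod_eq_zero (Finset.mem_univ i) this)
  have hsum : (β.sum fun _ e => e) + (α.sum fun _ e => e) = γ.sum fun _ e => e := by
    subst hβeq
    have h2 : (γ - α) + α = γ := tsub_add_cancel_of_le hle
    calc ((γ - α).sum fun _ e => e) + (α.sum fun _ e => e)
        = ((γ - α) + α).sum fun _ e => e := by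
          rw [Finsupp.sum_add_index' (fun _ => rfl) (fun _ _ _ => rfl)]
      _ = γ.sum fun _ e => e := by rw [h2]
  rw [hsum]
  exact MvPolynomial.le_totalDegree hγ

theorem support_sum_eq_of_isHomogeneous {n l₀ : ℕ} {Q : MvPolynomial (Fin n) ℂ}
    (hhom : Q.IsHomogeneous l₀) {α : Fin n →₀ ℕ} (hα : α ∈ Q.support) :
    (α.sum fun _ e => e) = l₀ := by
  have := hhom (MvPolynomial.mem_support_iff.mp hα)
  simpa [Finsupp.weight_apply, Finsupp.sum] using this

theorem totalDegree_multiDeriv_le {n : ℕ} (α : Fin n →₀ ℕ) (p : MvPolynomial (Fin n) ℂ)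
    {N l₀ : ℕ} (hα : (α.sum fun _ e => e) = l₀) (hp : p.totalDegree ≤ N) :
    (multiDeriv α p).totalDegree ≤ N - l₀ := by
  rw [totalDegree]
  apply Finset.sup_le
  intro β hβ
  have := multiDeriv_support_le α p hβ
  rw [hα] at this
  omega

theorem totalDegree_applyD_le {n : ℕ} {Q : MvPolynomial (Fin n) ℂ} {l₀ : ℕ}
    (hhom : Q.IsHomogeneous l₀) (p : MvPolynomial (Fin n) ℂ) {N : ℕ}
    (hp : p.totalDegree ≤ N) : (applyD Q p).totalDegree ≤ N - l₀ := by
  rw [applyD]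
  refine MvPolynomial.totalDegree_finsetSum_le ?_
  intro α hα
  exact (MvPolynomial.totalDegree_smul_le _ _).trans
    (totalDegree_multiDeriv_le α p (support_sum_eq_of_isHomogeneous hhom hα) hp)

theorem applyD_eq_zero_of_lt {n : ℕ} {Q : MvPolynomial (Fin n) ℂ} {l₀ : ℕ}
    (hhom : Q.IsHomogeneous l₀) (p : MvPolynomial (Fin n) ℂ)
    (hp : p.totalDegree < l₀) : applyD Q p = 0 := by
  rw [applyD]
  apply Finset.sum_eq_zero
  intro α hα
  have hz : multiDeriv α p = 0 := by
    by_contra h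
    obtain ⟨β, hβ⟩ := MvPolynomial.support_nonempty.mpr h
    have := multiDeriv_support_le α p hβ
    rw [support_sum_eq_of_isHomogeneous hhom hα] at this
    omega
  rw [hz, smul_zero]

theorem finrank_restrictTotalDegree_eq (n N : ℕ) :
    Module.finrank ℂ (restrictTotalDegree (Fin n) ℂ N) = (n + N).choose N := by
  classical
  have b := basisRestrictSupport ℂ { d : Fin n →₀ ℕ | (d.sum fun _ e => e) ≤ N }
  rw [show restrictTotalDegree (Fin n) ℂ N
      = restrictSupport ℂ { d : Fin n →₀ ℕ | (d.sum fun _ e => e) ≤ N } from rfl] at *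
  rw [Module.finrank_eq_nat_card_basis b]
  have e1 : { d : Fin n →₀ ℕ | (d.sum fun _ e => e) ≤ N } ≃ {f : Fin n → ℕ // ∑ i, f i ≤ N} :=
    Finsupp.equivFunOnFinite.subtypeEquiv (fun d => by
      simp [Finsupp.sum_fintype, Finsupp.equivFunOnFinite])
  have e2 : {f : Fin n → ℕ // ∑ i, f i ≤ N} ≃ {g : Fin (n+1) → ℕ // ∑ i, g i = N} :=
    { toFun := fun f => ⟨Fin.snoc f.1 (N - ∑ i, f.1 i), by
        have hf := f.2
        rw [Fin.sum_univ_castSucc]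
        simp only [Fin.snoc_castSucc, Fin.snoc_last]
        omega⟩
      invFun := fun g => ⟨Fin.init g.1, by
        have hg := g.2
        rw [Fin.sum_univ_castSucc] at hg
        simp only [Fin.init]
        omega⟩
      left_inv := fun f => by
        apply Subtype.ext
        simp [Fin.init_snoc]
      right_inv := fun g => by
        apply Subtype.ext
        have hg := g.2
        rw [Fin.sum_univ_castSucc] at hg
        have hlast : N - ∑ i, Fin.init g.1 i = g.1 (Fin.last n) := by
          simp only [Fin.init]
          omega
        simp only []
        rw [hlast, Fin.snoc_init_self] }
  have e3 := (Sym.equivNatSumOfFintype (Fin (n+1)) N).symm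
  rw [Nat.card_congr (e1.trans (e2.trans e3)), Nat.card_eq_fintype_card,
    Sym.card_sym_eq_choose]
  simp

theorem applyD_smul_left {n : ℕ} (c : ℂ) (P p : MvPolynomial (Fin n) ℂ) :
    applyD (c • P) p = c • applyD P p := by
  induction P using MvPolynomial.induction_on' with
  | monomial α d =>
    rw [smul_monomial, applyD_monomial_left, applyD_monomial_left, smul_smul, smul_eq_mul]
  | add q₁ q₂ h1 h2 => rw [smul_add, applyD_add_left, h1, h2, applyD_add_left, smul_add]

/-- `applyD` as a linear map in the second argument. -/
noncomputable def LD {n : ℕ} (Q : MvPolynomial (Fin n) ℂ) :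
    MvPolynomial (Fin n) ℂ →ₗ[ℂ] MvPolynomial (Fin n) ℂ :=
  ∑ α ∈ Q.support, Q.coeff α • multiDeriv α

theorem LD_apply {n : ℕ} (Q p : MvPolynomial (Fin n) ℂ) : LD Q p = applyD Q p := by
  rw [LD, applyD, LinearMap.sum_apply]
  simp [LinearMap.smul_apply]

/-- `applyD` as a bilinear map. -/
noncomputable def LDl {n : ℕ} : MvPolynomial (Fin n) ℂ →ₗ[ℂ]
    (MvPolynomial (Fin n) ℂ →ₗ[ℂ] MvPolynomial (Fin n) ℂ) where
  toFun := fun Q => LD Q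
  map_add' := fun Q R => LinearMap.ext fun p => by
    simp only [LD_apply, LinearMap.add_apply, applyD_add_left]
  map_smul' := fun c Q => LinearMap.ext fun p => by
    simp only [LD_apply, RingHom.id_apply, LinearMap.smul_apply, applyD_smul_left]

/-- The Fischer pairing as a bilinear map. -/
noncomputable def bigB {n : ℕ} : MvPolynomial (Fin n) ℂ →ₗ[ℂ]
    (MvPolynomial (Fin n) ℂ →ₗ[ℂ] ℂ) :=
  LDl.compr₂ (lcoeff ℂ 0)

theorem bigB_apply {n : ℕ} (p q : MvPolynomial (Fin n) ℂ) : bigB p q = BF p q := by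
  show coeff 0 (LD p q) = BF p q
  rw [LD_apply, BF]

theorem factorial_prod_ne_zero {n : ℕ} (α : Fin n →₀ ℕ) :
    ((∏ i, Nat.factorial (α i) : ℕ) : ℂ) ≠ 0 := by
  rw [Nat.cast_ne_zero]
  exact Finset.prod_ne_zero_iff.mpr fun i _ => (Nat.factorial_pos (α i)).ne'

theorem eq_zero_of_BF_monomial_eq_zero {n M : ℕ} (f : MvPolynomial (Fin n) ℂ)
    (hdeg : f.totalDegree ≤ M)
    (h : ∀ α : Fin n →₀ ℕ, (α.sum fun _ e => e) ≤ M → BF (monomial α 1) f = 0) : f = 0 := by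
  ext m
  rw [coeff_zero]
  rcases le_or_gt (m.sum fun _ e => e) M with hm | hm
  · have := h m hm
    rw [BF_monomial_left] at this
    exact (mul_eq_zero.mp this).resolve_left (factorial_prod_ne_zero m)
  · exact coeff_eq_zero_of_totalDegree_lt (lt_of_le_of_lt hdeg hm)

set_option synthInstance.maxHeartbeats 1000000 in
set_option maxHeartbeats 1000000 in
theorem dim_Q_harmonic_general (n l₀ : ℕ) (hn : 1 ≤ n) (hl₀ : 1 ≤ l₀)
    (Q : MvPolynomial (Fin n) ℂ) (hQ : Q ≠ 0) (hhom : Q.IsHomogeneous l₀) (N : ℕ) :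
    Module.finrank ℂ
        ↥(Submodule.span ℂ
          {p : MvPolynomial (Fin n) ℂ | p.totalDegree ≤ N ∧ applyD Q p = 0}) =
      Nat.choose (n + N) N - (if l₀ ≤ N then Nat.choose (n + N - l₀) (N - l₀) else 0) := by
  classical
  set W := restrictTotalDegree (Fin n) ℂ N with hW
  have hset : {p : MvPolynomial (Fin n) ℂ | p.totalDegree ≤ N ∧ applyD Q p = 0}
      = ↑(W ⊓ LinearMap.ker (LD Q)) := by
    ext p
    simp only [Set.mem_setOf_eq, SetLike.mem_coe, Submodule.mem_inf, LinearMap.mem_ker,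
      LD_apply, hW, mem_restrictTotalDegree]
  rw [hset, Submodule.span_eq]
  by_cases hN : l₀ ≤ N
  swap
  · push_neg at hN
    have hker : W ⊓ LinearMap.ker (LD Q) = W := inf_eq_left.mpr fun p hp =>
      LinearMap.mem_ker.mpr (by
        rw [LD_apply]
        exact applyD_eq_zero_of_lt hhom p
          (lt_of_le_of_lt ((mem_restrictTotalDegree _ _ _).mp hp) hN))
    rw [hker, if_neg (not_le.mpr hN), Nat.sub_zero, hW, finrank_restrictTotalDegree_eq]
  · set M := N - l₀ with hM
    set W' := restrictTotalDegree (Fin n) ℂ M with hW'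
    have hT : ∀ x ∈ W, LD Q x ∈ W' := fun x hx => by
      rw [hW', mem_restrictTotalDegree, LD_apply]
      exact totalDegree_applyD_le hhom x ((mem_restrictTotalDegree _ _ _).mp hx)
    set T : W →ₗ[ℂ] W' := (LD Q).restrict hT with hTdef
    -- the pairing map into the dual
    let e' : W' →ₗ[ℂ] Module.Dual ℂ W' :=
      { toFun := fun f => (bigB f.1).comp W'.subtype
        map_add' := fun f g => by
          simp only [Submodule.coe_add, map_add, LinearMap.add_comp]
        map_smul' := fun c f => by
          simp only [Submodule.coe_smul, map_smul, LinearMap.smul_comp, RingHom.id_apply] }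
    have he'apply : ∀ (f : W') (q : MvPolynomial (Fin n) ℂ) (hq : q ∈ W'),
        e' f ⟨q, hq⟩ = BF f.1 q := fun f q hq => bigB_apply f.1 q
    have he'inj : Function.Injective e' := by
      rw [injective_iff_map_eq_zero]
      intro f hf
      have hf1 : f.1 = 0 := by
        apply eq_zero_of_BF_monomial_eq_zero f.1 ((mem_restrictTotalDegree _ _ _).mp f.2)
        intro α hα
        have hmem : (monomial α 1 : MvPolynomial (Fin n) ℂ) ∈ W' := by
          rw [hW', mem_restrictTotalDegree]
          exact (totalDegree_monomial_le α 1).trans hα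
        have := congrArg (fun (g : Module.Dual ℂ W') => g ⟨monomial α 1, hmem⟩) hf
        simp only [LinearMap.zero_apply] at this
        rw [he'apply f _ hmem] at this
        rw [BF_comm, this]
      exact Subtype.ext hf1
    have he'surj : Function.Surjective e' :=
      (LinearMap.injective_iff_surjective_of_finrank_eq_finrank
        (Subspace.dual_finrank_eq).symm).mp he'inj
    have hTsurj : Function.Surjective T := by
      apply LinearMap.dualMap_injective_iff.mp
      rw [injective_iff_map_eq_zero]
      intro g hg
      obtain ⟨f, rfl⟩ := he'surj g
      have hQf : ∀ p, p ∈ W → BF (Q * f.1) p = 0 := by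
        intro p hp
        have h1 : T.dualMap (e' f) ⟨p, hp⟩ = 0 := by rw [hg]; rfl
        rw [LinearMap.dualMap_apply] at h1
        have h2 : (T ⟨p, hp⟩ : MvPolynomial (Fin n) ℂ) = LD Q p := rfl
        have h3 : e' f (T ⟨p, hp⟩) = BF f.1 (LD Q p) := by
          rw [show T ⟨p, hp⟩ = ⟨LD Q p, hT p hp⟩ from Subtype.ext h2]
          exact he'apply f _ _
        rw [h3, LD_apply] at h1
        rw [BF, mul_comm, applyD_mul, ← BF]
        exact h1
      have hdegQf : (Q * f.1).totalDegree ≤ N := by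
        refine (totalDegree_mul Q f.1).trans ?_
        have d1 : Q.totalDegree ≤ l₀ := hhom.totalDegree_le
        have d2 : f.1.totalDegree ≤ M := (mem_restrictTotalDegree _ _ _).mp f.2
        omega
      have hQf0 : Q * f.1 = 0 := by
        apply eq_zero_of_BF_monomial_eq_zero _ hdegQf
        intro α hα
        have hmem : (monomial α 1 : MvPolynomial (Fin n) ℂ) ∈ W := by
          rw [hW, mem_restrictTotalDegree]
          exact (totalDegree_monomial_le α 1).trans hα
        rw [BF_comm]
        exact hQf _ hmem
      have hf1 : f.1 = 0 := (mul_eq_zero.mp hQf0).resolve_left hQ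
      rw [Submodule.coe_eq_zero.mp hf1, map_zero]
    -- rank-nullity
    have hrank := LinearMap.finrank_range_add_finrank_ker T
    have hrangeT : Module.finrank ℂ (LinearMap.range T) = Module.finrank ℂ W' := by
      rw [LinearMap.range_eq_top.mpr hTsurj, finrank_top]
    -- identify the kernel
    have h1 : LinearMap.ker T = Submodule.comap W.subtype (LinearMap.ker (LD Q)) :=
      LinearMap.ker_restrict hT
    have h2 : Submodule.comap W.subtype (W ⊓ LinearMap.ker (LD Q)) = LinearMap.ker T := by
      rw [Submodule.comap_inf, h1, Submodule.comap_subtype_self, top_inf_eq]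
    have e3 := Submodule.comapSubtypeEquivOfLe
      (inf_le_left : W ⊓ LinearMap.ker (LD Q) ≤ W)
    have hfr : Module.finrank ℂ ↥(W ⊓ LinearMap.ker (LD Q))
        = Module.finrank ℂ (LinearMap.ker T) := by
      rw [← h2]
      exact e3.finrank_eq.symm
    have hdimW : Module.finrank ℂ W = (n + N).choose N := finrank_restrictTotalDegree_eq n N
    have hdimW' : Module.finrank ℂ W' = (n + M).choose M := finrank_restrictTotalDegree_eq n M
    rw [if_pos hN, hfr]
    have harith : n + N - l₀ = n + M := by omega
    rw [harith]
    have hfinal : Module.finrank ℂ W' + Module.finrank ℂ (LinearMap.ker T)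
        = Module.finrank ℂ W := by rw [← hrangeT]; exact hrank
    omega
end

section
/- Let n ≥ 1, r ≥ 1, s ≥ 0, and let Q be an r×r matrix whose entries are homogeneous polynomials of degree s in n variables over ℂ with det Q not identically zero. Then for every l ≥ 0 the operator Q(D) maps the space of ℂ^r-valued homogeneous polynomials of degree l+s in n variables onto the space of ℂ^r-valued homogeneous polynomials of degree l; consequently Q(D) is surjective as a linear map on the space of all ℂ^r-valued polynomials in n variables. -/
open BigOperators

namespace QDAux

open MvPolynomial

lemma nat_df_succ (m k : ℕ) : m * (m - 1).descFactorial k = m.descFactorial (k+1) := by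
  cases m with
  | zero => simp
  | succ m => rw [Nat.succ_descFactorial_succ]; simp

lemma pderiv_pow_monomial {n : ℕ} (i : Fin n) (k : ℕ) (β : Fin n →₀ ℕ) (c : ℂ) :
    ((MvPolynomial.pderiv i).toLinearMap ^ k) (monomial β c)
      = monomial (β - Finsupp.single i k) (((β i).descFactorial k : ℂ) * c) := by
  induction k generalizing β c with
  | zero => simp
  | succ k ih =>
    rw [pow_succ, Module.End.mul_apply]
    rw [show ((MvPolynomial.pderiv i).toLinearMap) (monomial β c) = pderiv i (monomial β c) from rfl,
      pderiv_monomial, ih]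
    have he : β - Finsupp.single i 1 - Finsupp.single i k = β - Finsupp.single i (k+1) := by
      rw [tsub_tsub, ← Finsupp.single_add, add_comm]
    rw [he]
    congr 1
    rw [Finsupp.tsub_apply, Finsupp.single_apply, if_pos rfl, ← nat_df_succ (β i) k]
    push_cast [Nat.cast_sub]
    ring

lemma list_prod_monomial {n : ℕ} (m : ℕ) (ι : Fin m → Fin n) (hι : Function.Injective ι)
    (a : Fin m → ℕ) (β : Fin n →₀ ℕ) (c : ℂ) :
    ((List.ofFn fun j : Fin m => (MvPolynomial.pderiv (ι j)).toLinearMap ^ a j).prod)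
        (monomial β c)
      = monomial (β - ∑ j, Finsupp.single (ι j) (a j))
          ((∏ j, (β (ι j)).descFactorial (a j) : ℕ) * c) := by
  induction m generalizing β c with
  | zero => simp
  | succ m ih =>
    rw [List.ofFn_succ, List.prod_cons, Module.End.mul_apply]
    rw [ih (fun j => ι j.succ) (fun x y hxy => Fin.succ_injective _ (hι hxy)) (fun j => a j.succ)]
    rw [pderiv_pow_monomial]
    have hS : (∑ j : Fin m, Finsupp.single (ι j.succ) (a j.succ)) (ι 0) = 0 := by
      rw [Finsupp.finset_sum_apply]
      refine Finset.sum_eq_zero fun j _ => ?_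
      rw [Finsupp.single_apply, if_neg (fun h => Fin.succ_ne_zero j (hι h))]
    have hc : (β - ∑ j : Fin m, Finsupp.single (ι j.succ) (a j.succ)) (ι 0) = β (ι 0) := by
      rw [Finsupp.tsub_apply, hS, Nat.sub_zero]
    rw [hc, tsub_tsub]
    rw [Fin.sum_univ_succ, Fin.prod_univ_succ, add_comm]
    push_cast
    ring_nf

lemma multiDeriv_monomial {n : ℕ} (α β : Fin n →₀ ℕ) (c : ℂ) :
    multiDeriv α (monomial β c)
      = monomial (β - α) ((∏ i, (β i).descFactorial (α i) : ℕ) * c) := by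
  have h := list_prod_monomial n (fun i => i) (fun _ _ h => h) (fun i => α i) β c
  have hα : (∑ j : Fin n, Finsupp.single j (α j)) = α := by
    ext i
    rw [Finsupp.finset_sum_apply, Finset.sum_eq_single i (fun j _ hj => by
      rw [Finsupp.single_apply, if_neg hj]) (by simp), Finsupp.single_apply, if_pos rfl]
  rw [multiDeriv]
  rw [h, hα]

lemma applyD_eq_sum {n : ℕ} (Q p : MvPolynomial (Fin n) ℂ) :
    applyD Q p = (AddMonoidAlgebra.coeff Q).sum fun α c => c • multiDeriv α p := rfl

lemma applyD_add_left {n : ℕ} (Q Q' p : MvPolynomial (Fin n) ℂ) :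
    applyD (Q + Q') p = applyD Q p + applyD Q' p := by
  rw [applyD_eq_sum, applyD_eq_sum, applyD_eq_sum]
  exact Finsupp.sum_add_index' (fun α => by simp) (fun α b b' => add_smul b b' _)

lemma applyD_smul_left {n : ℕ} (c : ℂ) (Q p : MvPolynomial (Fin n) ℂ) :
    applyD (c • Q) p = c • applyD Q p := by
  rw [applyD_eq_sum, applyD_eq_sum, Finsupp.smul_sum]
  exact Finsupp.sum_smul_index' (fun α => by simp) |>.trans (by
    refine Finsupp.sum_congr fun α _ => ?_
    rw [smul_eq_mul, mul_smul])

lemma applyD_add_right {n : ℕ} (Q p p' : MvPolynomial (Fin n) ℂ) :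
    applyD Q (p + p') = applyD Q p + applyD Q p' := by
  unfold applyD
  rw [← Finset.sum_add_distrib]
  exact Finset.sum_congr rfl fun α _ => by rw [map_add, smul_add]

lemma applyD_smul_right {n : ℕ} (c : ℂ) (Q p : MvPolynomial (Fin n) ℂ) :
    applyD Q (c • p) = c • applyD Q p := by
  unfold applyD
  rw [Finset.smul_sum]
  exact Finset.sum_congr rfl fun α _ => by rw [map_smul, smul_comm]

lemma applyD_zero_right {n : ℕ} (Q : MvPolynomial (Fin n) ℂ) : applyD Q 0 = 0 := by
  unfold applyD
  exact Finset.sum_eq_zero fun α _ => by rw [map_zero, smul_zero]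

lemma applyD_monomial_left {n : ℕ} (γ : Fin n →₀ ℕ) (b : ℂ) (p : MvPolynomial (Fin n) ℂ) :
    applyD (monomial γ b) p = b • multiDeriv γ p := by
  unfold applyD
  rcases eq_or_ne b 0 with rfl | hb
  · simp
  · rw [support_monomial, if_neg hb, Finset.sum_singleton, coeff_monomial, if_pos rfl]

/-- product of factorials of the exponents -/
def ffact {n : ℕ} (β : Fin n →₀ ℕ) : ℕ := ∏ i, (β i).factorial

lemma ffact_ne_zero {n : ℕ} (β : Fin n →₀ ℕ) : (ffact β : ℂ) ≠ 0 := by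
  rw [Nat.cast_ne_zero, ffact]
  exact Finset.prod_ne_zero_iff.mpr fun i _ => Nat.factorial_ne_zero _

lemma coeff0_multiDeriv {n : ℕ} (β : Fin n →₀ ℕ) (u : MvPolynomial (Fin n) ℂ) :
    coeff 0 (multiDeriv β u) = (ffact β : ℂ) * coeff β u := by
  rw [show (multiDeriv β u) = ∑ δ ∈ u.support, multiDeriv β (monomial δ (coeff δ u)) by
    rw [← map_sum, ← u.as_sum]]
  rw [coeff_sum]
  have key : ∀ δ ∈ u.support, coeff 0 (multiDeriv β (monomial δ (coeff δ u)))
      = if δ = β then (ffact β : ℂ) * coeff β u else 0 := by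
    intro δ _
    rw [multiDeriv_monomial, coeff_monomial]
    rcases eq_or_ne δ β with rfl | hδ
    · rw [if_pos rfl, if_pos (by simp), ffact]
      simp [Nat.descFactorial_self]
    · rw [if_neg hδ]
      by_cases hle : β ≤ δ
      · rw [if_neg]
        intro h
        exact hδ (le_antisymm (tsub_eq_zero_iff_le.mp h) hle)
      · have : ∃ i, δ i < β i := by
          by_contra hco
          push_neg at hco
          exact hle (Finsupp.le_def.mpr hco)
        obtain ⟨i, hi⟩ := this
        have : (∏ j, (δ j).descFactorial (β j)) = 0 :=
          Finset.prod_eq_zero (Finset.mem_univ i) (Nat.descFactorial_eq_zero_iff_lt.mpr hi)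
        rw [this]
        simp
  rw [Finset.sum_congr rfl key, Finset.sum_ite_eq' u.support β _]
  by_cases h : β ∈ u.support
  · rw [if_pos h]
  · rw [if_neg h, MvPolynomial.notMem_support_iff.mp h]
    ring

/-- the pairing `⟨p, q⟩ = (p(D) q)(0)` -/
noncomputable def Bf {n : ℕ} (p q : MvPolynomial (Fin n) ℂ) : ℂ := coeff 0 (applyD p q)

lemma Bf_monomial_left {n : ℕ} (β : Fin n →₀ ℕ) (b : ℂ) (u : MvPolynomial (Fin n) ℂ) :
    Bf (monomial β b) u = b * ((ffact β : ℂ) * coeff β u) := by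
  rw [Bf, applyD_monomial_left, coeff_smul, smul_eq_mul, coeff0_multiDeriv]

lemma Bf_add_left {n : ℕ} (p p' q : MvPolynomial (Fin n) ℂ) :
    Bf (p + p') q = Bf p q + Bf p' q := by
  rw [Bf, Bf, Bf, applyD_add_left, coeff_add]

lemma Bf_add_right {n : ℕ} (p q q' : MvPolynomial (Fin n) ℂ) :
    Bf p (q + q') = Bf p q + Bf p q' := by
  rw [Bf, Bf, Bf, applyD_add_right, coeff_add]

lemma Bf_smul_left {n : ℕ} (c : ℂ) (p q : MvPolynomial (Fin n) ℂ) :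
    Bf (c • p) q = c * Bf p q := by
  rw [Bf, Bf, applyD_smul_left, coeff_smul, smul_eq_mul]

lemma Bf_smul_right {n : ℕ} (c : ℂ) (p q : MvPolynomial (Fin n) ℂ) :
    Bf p (c • q) = c * Bf p q := by
  rw [Bf, Bf, applyD_smul_right, coeff_smul, smul_eq_mul]

lemma Bf_zero_right {n : ℕ} (p : MvPolynomial (Fin n) ℂ) : Bf p 0 = 0 := by
  rw [Bf, applyD_zero_right, coeff_zero]

lemma Bf_sum_right {n : ℕ} {ι : Type*} (t : Finset ι) (p : MvPolynomial (Fin n) ℂ)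
    (g : ι → MvPolynomial (Fin n) ℂ) :
    Bf p (∑ x ∈ t, g x) = ∑ x ∈ t, Bf p (g x) := by
  classical
  induction t using Finset.induction_on with
  | empty => simp [Bf_zero_right]
  | insert _ _ hx ih =>
    rw [Finset.sum_insert hx, Finset.sum_insert hx, Bf_add_right, ih]

lemma Bf_sum_left {n : ℕ} {ι : Type*} (t : Finset ι) (g : ι → MvPolynomial (Fin n) ℂ)
    (q : MvPolynomial (Fin n) ℂ) :
    Bf (∑ x ∈ t, g x) q = ∑ x ∈ t, Bf (g x) q := by
  classical
  induction t using Finset.induction_on with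
  | empty =>
    simp only [Finset.sum_empty]
    rw [Bf, show (0 : MvPolynomial (Fin n) ℂ) = (0 : ℂ) • 0 by simp, applyD_smul_left]
    simp
  | insert _ _ hx ih =>
    rw [Finset.sum_insert hx, Finset.sum_insert hx, Bf_add_left, ih]

lemma Bf_core {n : ℕ} (γ β δ : Fin n →₀ ℕ) (b c d : ℂ) :
    Bf (applyD (monomial γ b) (monomial β c)) (monomial δ d)
      = Bf (monomial β c) (monomial γ b * monomial δ d) := by
  rw [applyD_monomial_left, multiDeriv_monomial, smul_monomial, monomial_mul,
    Bf_monomial_left, Bf_monomial_left, coeff_monomial, coeff_monomial]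
  simp only [smul_eq_mul]
  by_cases hle : γ ≤ β
  · by_cases heq : γ + δ = β
    · rw [if_pos heq, if_pos (by rw [← heq, add_tsub_cancel_left])]
      have hf : (ffact (β - γ) : ℂ) * (∏ i, (β i).descFactorial (γ i) : ℕ) = (ffact β : ℂ) := by
        rw [← Nat.cast_mul]
        congr 1
        rw [ffact, ffact, ← Finset.prod_mul_distrib]
        refine Finset.prod_congr rfl fun i _ => ?_
        rw [Finsupp.tsub_apply]
        exact Nat.factorial_mul_descFactorial (Finsupp.le_def.mp hle i)
      linear_combination (b * c * d) * hf
    · rw [if_neg heq, if_neg (fun h : δ = β - γ => heq (by rw [h, add_tsub_cancel_of_le hle]))]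
      ring
  · have : ∃ i, β i < γ i := by
      by_contra hco; push_neg at hco; exact hle (Finsupp.le_def.mpr hco)
    obtain ⟨i, hi⟩ := this
    have hz : (∏ i, (β i).descFactorial (γ i)) = 0 :=
      Finset.prod_eq_zero (Finset.mem_univ i) (Nat.descFactorial_eq_zero_iff_lt.mpr hi)
    rw [hz, if_neg (fun h : γ + δ = β => hle (h ▸ le_self_add))]
    simp

lemma Bf_adjoint {n : ℕ} (Q p q : MvPolynomial (Fin n) ℂ) :
    Bf (applyD Q p) q = Bf p (Q * q) := by
  induction Q using MvPolynomial.induction_on' generalizing p q with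
  | add Q Q' hQ hQ' =>
    rw [applyD_add_left, Bf_add_left, add_mul, Bf_add_right, hQ, hQ']
  | monomial γ b =>
    induction p using MvPolynomial.induction_on' generalizing q with
    | add p p' hp hp' => rw [applyD_add_right, Bf_add_left, Bf_add_left, hp, hp']
    | monomial β c =>
      induction q using MvPolynomial.induction_on' with
      | add q q' hq hq' => rw [Bf_add_right, mul_add, Bf_add_right, hq, hq']
      | monomial δ d => exact Bf_core γ β δ b c d

lemma degree_eq_of_mem_support {n m : ℕ} {p : MvPolynomial (Fin n) ℂ}
    (hp : p.IsHomogeneous m) {β : Fin n →₀ ℕ} (hβ : β ∈ p.support) :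
    Finsupp.degree β = m := by
  rw [Finsupp.degree_eq_weight_one]
  exact hp (mem_support_iff.mp hβ)

lemma multiDeriv_mem {n l s : ℕ} {α : Fin n →₀ ℕ} (hα : Finsupp.degree α = s)
    {p : MvPolynomial (Fin n) ℂ} (hp : p.IsHomogeneous (l + s)) :
    multiDeriv α p ∈ homogeneousSubmodule (Fin n) ℂ l := by
  rw [show (multiDeriv α p) = ∑ β ∈ p.support, multiDeriv α (monomial β (coeff β p)) by
    rw [← map_sum, ← p.as_sum]]
  refine Submodule.sum_mem _ fun β hβ => ?_
  rw [multiDeriv_monomial]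
  by_cases hle : α ≤ β
  · rw [mem_homogeneousSubmodule]
    refine isHomogeneous_monomial _ ?_
    have h1 : Finsupp.degree (β - α) + Finsupp.degree α = Finsupp.degree β := by
      simp only [Finsupp.degree_eq_weight_one]
      rw [← map_add, tsub_add_cancel_of_le hle]
    have h2 := degree_eq_of_mem_support hp hβ
    omega
  · have : ∃ i, β i < α i := by
      by_contra hco; push_neg at hco; exact hle (Finsupp.le_def.mpr hco)
    obtain ⟨i, hi⟩ := this
    have hz : (∏ i, (β i).descFactorial (α i)) = 0 :=
      Finset.prod_eq_zero (Finset.mem_univ i) (Nat.descFactorial_eq_zero_iff_lt.mpr hi)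
    rw [hz]
    simp only [Nat.cast_zero, zero_mul, map_zero]
    exact Submodule.zero_mem _

lemma applyD_mem {n l s : ℕ} {Q : MvPolynomial (Fin n) ℂ} (hQ : Q.IsHomogeneous s)
    {p : MvPolynomial (Fin n) ℂ} (hp : p.IsHomogeneous (l + s)) :
    applyD Q p ∈ homogeneousSubmodule (Fin n) ℂ l := by
  refine Submodule.sum_mem _ fun α hα => Submodule.smul_mem _ _ ?_
  exact multiDeriv_mem (degree_eq_of_mem_support hQ hα) hp

instance homog_fd (n m : ℕ) : FiniteDimensional ℂ (homogeneousSubmodule (Fin n) ℂ m) := by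
  refine Submodule.finiteDimensional_of_le (S₂ := restrictTotalDegree (Fin n) ℂ m) ?_
  intro p hp
  rw [mem_restrictTotalDegree]
  exact ((mem_homogeneousSubmodule _ _).mp hp).totalDegree_le


lemma Bf_zero_left {n : ℕ} (q : MvPolynomial (Fin n) ℂ) : Bf 0 q = 0 := by
  rw [Bf]
  unfold applyD
  simp

lemma applyD_sum_right {n : ℕ} {ι : Type*} (t : Finset ι) (Q : MvPolynomial (Fin n) ℂ)
    (g : ι → MvPolynomial (Fin n) ℂ) :
    applyD Q (∑ x ∈ t, g x) = ∑ x ∈ t, applyD Q (g x) := by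
  classical
  induction t using Finset.induction_on with
  | empty => simp [applyD_zero_right]
  | insert _ _ hx ih =>
    rw [Finset.sum_insert hx, Finset.sum_insert hx, applyD_add_right, ih]

/-- the pairing as a map into the dual space -/
noncomputable def Phi (n r m : ℕ) :
    (∀ _ : Fin r, homogeneousSubmodule (Fin n) ℂ m) →ₗ[ℂ]
      Module.Dual ℂ (∀ _ : Fin r, homogeneousSubmodule (Fin n) ℂ m) where
  toFun q :=
    { toFun := fun p => ∑ i, Bf (p i : MvPolynomial (Fin n) ℂ) (q i : MvPolynomial (Fin n) ℂ)
      map_add' := fun p p' => by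
        simp only [Pi.add_apply, Submodule.coe_add, Bf_add_left, Finset.sum_add_distrib]
      map_smul' := fun c p => by
        simp only [Pi.smul_apply, SetLike.val_smul, Bf_smul_left, RingHom.id_apply,
          smul_eq_mul, Finset.mul_sum] }
  map_add' q q' := by
    refine LinearMap.ext fun p => ?_
    simp only [LinearMap.coe_mk, AddHom.coe_mk, LinearMap.add_apply, Pi.add_apply,
      Submodule.coe_add, Bf_add_right, Finset.sum_add_distrib]
  map_smul' c q := by
    refine LinearMap.ext fun p => ?_
    simp only [LinearMap.coe_mk, AddHom.coe_mk, RingHom.id_apply, LinearMap.smul_apply,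
      Pi.smul_apply, SetLike.val_smul, Bf_smul_right, smul_eq_mul, Finset.mul_sum]

lemma Phi_inj (n r m : ℕ) : Function.Injective (Phi n r m) := by
  rw [injective_iff_map_eq_zero]
  intro q hq
  funext i₀
  refine Subtype.ext (MvPolynomial.ext _ _ fun β => ?_)
  simp only [Pi.zero_apply, Submodule.coe_zero, coeff_zero]
  by_cases hβ : Finsupp.degree β = m
  · classical
    have hmem : monomial β (1 : ℂ) ∈ homogeneousSubmodule (Fin n) ℂ m :=
      isHomogeneous_monomial _ hβ
    set p₀ : ∀ _ : Fin r, homogeneousSubmodule (Fin n) ℂ m :=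
      Function.update (0 : ∀ _ : Fin r, homogeneousSubmodule (Fin n) ℂ m) i₀
        ⟨monomial β 1, hmem⟩ with hp₀
    have htest := DFunLike.congr_fun hq p₀
    simp only [LinearMap.zero_apply] at htest
    rw [show ((Phi n r m) q) p₀
        = ∑ i, Bf (p₀ i : MvPolynomial (Fin n) ℂ) (q i : MvPolynomial (Fin n) ℂ) from rfl] at htest
    rw [Finset.sum_eq_single i₀ (fun i _ hi => by
        rw [hp₀, Function.update_of_ne hi]
        simp [Bf_zero_left]) (by simp)] at htest
    rw [hp₀, Function.update_self, Bf_monomial_left, one_mul] at htest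
    exact (mul_eq_zero.mp htest).resolve_left (ffact_ne_zero β)
  · exact ((q i₀).2 : (q i₀ : MvPolynomial (Fin n) ℂ).IsHomogeneous m).coeff_eq_zero hβ

lemma Phi_surj (n r m : ℕ) : Function.Surjective (Phi n r m) :=
  (LinearMap.injective_iff_surjective_of_finrank_eq_finrank
    Subspace.dual_finrank_eq.symm).mp (Phi_inj n r m)

lemma key (n r s : ℕ)
    (Q : Matrix (Fin r) (Fin r) (MvPolynomial (Fin n) ℂ))
    (hhom : ∀ i j, (Q i j).IsHomogeneous s)
    (hdet : Q.det ≠ 0) (l : ℕ)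
    (f : Fin r → MvPolynomial (Fin n) ℂ) (hf : ∀ i, (f i).IsHomogeneous l) :
      ∃ p : Fin r → MvPolynomial (Fin n) ℂ,
        (∀ i, (p i).IsHomogeneous (l + s)) ∧
        ∀ i, ∑ j, applyD (Q i j) (p j) = f i := by
  classical
  let T : (∀ _ : Fin r, homogeneousSubmodule (Fin n) ℂ (l+s)) →ₗ[ℂ]
      (∀ _ : Fin r, homogeneousSubmodule (Fin n) ℂ l) :=
    { toFun := fun p i => ⟨∑ j, applyD (Q i j) (p j : MvPolynomial (Fin n) ℂ),
        Submodule.sum_mem _ fun j _ => applyD_mem (hhom i j) (p j).2⟩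
      map_add' := fun p p' => by
        funext i
        refine Subtype.ext ?_
        simp only [Pi.add_apply, Submodule.coe_add, applyD_add_right, Finset.sum_add_distrib]
      map_smul' := fun c p => by
        funext i
        refine Subtype.ext ?_
        simp only [Pi.smul_apply, SetLike.val_smul, applyD_smul_right, RingHom.id_apply,
          Finset.smul_sum] }
  let S : (∀ _ : Fin r, homogeneousSubmodule (Fin n) ℂ l) →ₗ[ℂ]
      (∀ _ : Fin r, homogeneousSubmodule (Fin n) ℂ (l+s)) :=
    { toFun := fun q j => ⟨∑ i, Q i j * (q i : MvPolynomial (Fin n) ℂ),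
        Submodule.sum_mem _ fun i _ =>
          (add_comm s l ▸ ((hhom i j).mul ((q i).2 :
            (q i : MvPolynomial (Fin n) ℂ).IsHomogeneous l)))⟩
      map_add' := fun q q' => by
        funext j
        refine Subtype.ext ?_
        simp only [Pi.add_apply, Submodule.coe_add, mul_add, Finset.sum_add_distrib]
      map_smul' := fun c q => by
        funext j
        refine Subtype.ext ?_
        simp only [Pi.smul_apply, SetLike.val_smul, RingHom.id_apply, Finset.smul_sum,
          Algebra.mul_smul_comm] }
  have hsurj : Function.Surjective T := by
    rw [← LinearMap.dualMap_injective_iff]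
    rw [injective_iff_map_eq_zero]
    intro φ hφ
    obtain ⟨q, rfl⟩ := Phi_surj n r l φ
    have hq0 : Phi n r (l+s) (S q) = 0 := by
      refine LinearMap.ext fun p => ?_
      have step : ∑ j, Bf (p j : MvPolynomial (Fin n) ℂ) ((S q) j : MvPolynomial (Fin n) ℂ)
          = ∑ i, Bf ((T p) i : MvPolynomial (Fin n) ℂ) (q i : MvPolynomial (Fin n) ℂ) := by
        have h1 : ∀ j, ((S q) j : MvPolynomial (Fin n) ℂ)
            = ∑ i, Q i j * (q i : MvPolynomial (Fin n) ℂ) := fun j => rfl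
        have h2 : ∀ i, ((T p) i : MvPolynomial (Fin n) ℂ)
            = ∑ j, applyD (Q i j) (p j : MvPolynomial (Fin n) ℂ) := fun i => rfl
        simp only [h1, h2, Bf_sum_right, Bf_sum_left]
        rw [Finset.sum_comm]
        exact Finset.sum_congr rfl fun i _ => Finset.sum_congr rfl fun j _ =>
          (Bf_adjoint (Q i j) (p j : MvPolynomial (Fin n) ℂ) (q i : MvPolynomial (Fin n) ℂ)).symm
      have : ((Phi n r (l+s)) (S q)) p
          = ((Phi n r l) q) (T p) := step
      rw [LinearMap.zero_apply, this, ← LinearMap.dualMap_apply, hφ, LinearMap.zero_apply]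
    have hSq : S q = 0 := Phi_inj n r (l+s) (by rw [hq0, map_zero])
    have hqv : (fun i => (q i : MvPolynomial (Fin n) ℂ)) ≠ 0 → Q.det = 0 := by
      intro hne
      rw [← Matrix.exists_vecMul_eq_zero_iff]
      refine ⟨_, hne, funext fun j => ?_⟩
      have := congrArg (fun z => ((z j : homogeneousSubmodule (Fin n) ℂ (l+s)) :
        MvPolynomial (Fin n) ℂ)) hSq
      rw [show (((S q) j : homogeneousSubmodule (Fin n) ℂ (l+s)) : MvPolynomial (Fin n) ℂ)
        = ∑ i, Q i j * (q i : MvPolynomial (Fin n) ℂ) from rfl] at this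
      simp only [Pi.zero_apply, Submodule.coe_zero] at this
      simpa [Matrix.vecMul, dotProduct, mul_comm] using this
    have hq : q = 0 := by
      by_cases hne : (fun i => (q i : MvPolynomial (Fin n) ℂ)) = 0
      · funext i
        exact Subtype.ext (congrFun hne i)
      · exact absurd (hqv hne) hdet
    rw [hq, map_zero]
  obtain ⟨p, hp⟩ := hsurj (fun i => ⟨f i, hf i⟩)
  refine ⟨fun j => (p j : MvPolynomial (Fin n) ℂ), fun j => (p j).2, fun i => ?_⟩
  have := congrFun hp i
  exact congrArg Subtype.val this

end QDAux


theorem matrix_QD_surjective (n r s : ℕ) (hn : 1 ≤ n) (hr : 1 ≤ r)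
    (Q : Matrix (Fin r) (Fin r) (MvPolynomial (Fin n) ℂ))
    (hhom : ∀ i j, (Q i j).IsHomogeneous s)
    (hdet : Q.det ≠ 0) :
    (∀ (l : ℕ) (f : Fin r → MvPolynomial (Fin n) ℂ), (∀ i, (f i).IsHomogeneous l) →
      ∃ p : Fin r → MvPolynomial (Fin n) ℂ,
        (∀ i, (p i).IsHomogeneous (l + s)) ∧
        ∀ i, ∑ j, applyD (Q i j) (p j) = f i) ∧
    (∀ f : Fin r → MvPolynomial (Fin n) ℂ,
      ∃ p : Fin r → MvPolynomial (Fin n) ℂ,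
        ∀ i, ∑ j, applyD (Q i j) (p j) = f i) := by
  classical
  have part1 := QDAux.key n r s Q hhom hdet
  refine ⟨part1, fun f => ?_⟩
  set N := Finset.sup Finset.univ (fun i => (f i).totalDegree) with hN
  choose P hPhom hPeq using fun l : ℕ =>
    part1 l (fun i => MvPolynomial.homogeneousComponent l (f i))
      (fun i => MvPolynomial.homogeneousComponent_isHomogeneous l (f i))
  refine ⟨fun j => ∑ l ∈ Finset.range (N+1), P l j, fun i => ?_⟩
  have h1 : ∑ j, applyD (Q i j) (∑ l ∈ Finset.range (N+1), P l j)
      = ∑ l ∈ Finset.range (N+1), ∑ j, applyD (Q i j) (P l j) := by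
    rw [Finset.sum_congr rfl fun j _ => QDAux.applyD_sum_right _ _ _]
    exact Finset.sum_comm
  rw [h1, Finset.sum_congr rfl fun l _ => hPeq l i]
  have h2 : (f i).totalDegree + 1 ≤ N + 1 := by
    have : (f i).totalDegree ≤ N := by
      rw [hN]; exact Finset.le_sup (f := fun i => (f i).totalDegree) (Finset.mem_univ i)
    omega
  rw [← Finset.sum_subset (Finset.range_subset_range.mpr h2) (fun l _ hl => by
    refine MvPolynomial.homogeneousComponent_eq_zero _ _ ?_
    simp only [Finset.mem_range, not_lt] at hl
    omega)]
  exact MvPolynomial.sum_homogeneousComponent (f i)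
end

section
/- Let l₀ ≥ 1, N ≥ 0, and let V₀, V₁, …, V_N be finite-dimensional complex vector spaces. Let A be a linear endomorphism of V = ⊕_{l=0}^N V_l whose components A_{ij} : V_j → V_i satisfy: A_{ij} = 0 whenever i − j < l₀, and A_{j+l₀, j} is injective for every j with j + l₀ ≤ N. Then the kernel of A is exactly the subspace ⊕_{l=N−l₀+1}^{N} V_l of elements whose components of index at most N−l₀ all vanish; in particular dim ker A = ∑_{l=N−l₀+1}^{N} dim V_l (and ker A = V when N < l₀). -/
open BigOperators

theorem triangular_endomorphism_kernel (l₀ N : ℕ) (hl₀ : 1 ≤ l₀)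
    (V : Fin (N + 1) → Type*)
    [∀ l, AddCommGroup (V l)] [∀ l, Module ℂ (V l)] [∀ l, FiniteDimensional ℂ (V l)]
    (A : (∀ l, V l) →ₗ[ℂ] (∀ l, V l))
    (htri : ∀ (i j : Fin (N + 1)) (v : V j), (i : ℕ) < (j : ℕ) + l₀ →
      A (Pi.single j v) i = 0)
    (hinj : ∀ (i j : Fin (N + 1)), (i : ℕ) = (j : ℕ) + l₀ →
      Function.Injective (fun v : V j => A (Pi.single j v) i)) :
    (∀ p : ∀ l, V l, A p = 0 ↔ ∀ l : Fin (N + 1), (l : ℕ) + l₀ ≤ N → p l = 0) ∧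
    Module.finrank ℂ ↥(LinearMap.ker A) =
      ∑ l ∈ Finset.univ.filter (fun l : Fin (N + 1) => N < (l : ℕ) + l₀),
        Module.finrank ℂ (V l) := by
  classical
  -- decomposition of A p into components
  have key : ∀ (p : ∀ l, V l) (i : Fin (N + 1)),
      A p i = ∑ j : Fin (N + 1), A (Pi.single j (p j)) i := by
    intro p i
    conv_lhs => rw [← Finset.univ_sum_single p]
    rw [map_sum, Finset.sum_apply]
  have part1 : ∀ p : ∀ l, V l, A p = 0 ↔ ∀ l : Fin (N + 1), (l : ℕ) + l₀ ≤ N → p l = 0 := by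
    intro p
    constructor
    · intro hA
      have H : ∀ n : ℕ, ∀ l : Fin (N + 1), (l : ℕ) = n → (l : ℕ) + l₀ ≤ N → p l = 0 := by
        intro n
        induction n using Nat.strong_induction_on with
        | _ n ih =>
          intro l hln hlN
          set i : Fin (N + 1) := ⟨(l : ℕ) + l₀, by omega⟩ with hi
          have hApi : A p i = 0 := by rw [hA]; rfl
          rw [key] at hApi
          have hsingle : ∑ j : Fin (N + 1), A (Pi.single j (p j)) i
              = A (Pi.single l (p l)) i := by
            refine Finset.sum_eq_single l ?_ (by simp)
            intro j _ hj
            rcases lt_trichotomy (j : ℕ) (l : ℕ) with h | h | h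
            · have : p j = 0 := ih (j : ℕ) (by omega) j rfl (by omega)
              rw [this]
              simp
            · exact absurd (Fin.ext h) hj
            · exact htri i j (p j) (by simp [hi]; omega)
          rw [hsingle] at hApi
          have h0 : A (Pi.single l (0 : V l)) i = 0 := by simp
          exact hinj i l (by simp [hi]) (show A (Pi.single l (p l)) i = A (Pi.single l 0) i by rw [hApi, h0])
      intro l
      exact H (l : ℕ) l rfl
    · intro h
      ext i
      rw [key]
      refine Finset.sum_eq_zero ?_
      intro j _
      by_cases hj : (j : ℕ) + l₀ ≤ N
      · rw [h j hj]; simp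
      · exact htri i j (p j) (by omega)
  refine ⟨part1, ?_⟩
  -- the equivalence of the kernel with the product of high-index spaces
  set S := {l : Fin (N + 1) // N < (l : ℕ) + l₀}
  let f : LinearMap.ker A →ₗ[ℂ] (∀ s : S, V s.1) :=
    LinearMap.pi (fun s => (LinearMap.proj s.1).comp (LinearMap.ker A).subtype)
  have hbij : Function.Bijective f := by
    constructor
    · intro p q hpq
      ext l
      by_cases hl : (l : ℕ) + l₀ ≤ N
      · rw [(part1 p.1).1 p.2 l hl, (part1 q.1).1 q.2 l hl]
      · exact congrFun hpq ⟨l, by omega⟩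
    · intro q
      refine ⟨⟨fun l => if h : N < (l : ℕ) + l₀ then q ⟨l, h⟩ else 0, ?_⟩, ?_⟩
      · refine LinearMap.mem_ker.2 ((part1 _).2 ?_)
        intro l hl
        simp only [dif_neg (by omega : ¬ N < (l : ℕ) + l₀)]
      · funext s
        simp only [f, LinearMap.pi_apply, LinearMap.comp_apply, Submodule.coe_subtype,
          LinearMap.proj_apply]
        exact dif_pos s.2
  have e : LinearMap.ker A ≃ₗ[ℂ] (∀ s : S, V s.1) := LinearEquiv.ofBijective f hbij
  rw [e.finrank_eq, Module.finrank_pi_fintype]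
  exact (Finset.sum_subtype _ (by simp) (fun l => Module.finrank ℂ (V l))).symm
end

section
/- Let n ≥ 1, let a : ℝⁿ → Mat_{n×n}(ℝ) be such that a(x) is symmetric and positive semidefinite for every x, let b : ℝⁿ → ℝⁿ, and define the operator L on twice continuously differentiable functions v : ℝⁿ → ℂ by (Lv)(x) = −∑_{i,j} a_{ij}(x) ∂_i∂_j v(x) + ∑_i b_i(x) ∂_i v(x). Let u : ℝⁿ → ℂ be twice continuously differentiable and λ ∈ ℂ with Lu = λu pointwise. Then pointwise L(|u|²) = 2 Re(λ)|u|² − 2 ∑_{i,j} a_{ij} ∂_i u · \overline{∂_j u}, the quantity ∑_{i,j} a_{ij}(x) ζ_i \overline{ζ_j} is real and nonnegative for every ζ ∈ ℂⁿ, and consequently, if Re λ ≤ 0, then L(|u|²)(x) ≤ 0 for all x ∈ ℝⁿ. -/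
open BigOperators Complex

/-- The partial derivative `∂_i f` of a complex-valued function on `ℝⁿ`. -/
noncomputable def pd {n : ℕ} (i : Fin n) (f : (Fin n → ℝ) → ℂ) : (Fin n → ℝ) → ℂ :=
  fun x => fderiv ℝ f x (Pi.single i 1)

/-- The second-order operator `(Lv)(x) = −∑_{i,j} a_{ij}(x) ∂_i∂_j v(x) + ∑_i b_i(x) ∂_i v(x)`. -/
noncomputable def Lop {n : ℕ} (a : (Fin n → ℝ) → Matrix (Fin n) (Fin n) ℝ)
    (b : (Fin n → ℝ) → Fin n → ℝ) (v : (Fin n → ℝ) → ℂ) : (Fin n → ℝ) → ℂ :=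
  fun x => -(∑ i, ∑ j, (a x i j : ℂ) * pd i (pd j v) x) + ∑ i, (b x i : ℂ) * pd i v x


lemma pd_add {n : ℕ} (i : Fin n) (f g : (Fin n → ℝ) → ℂ) (x : Fin n → ℝ)
    (hf : DifferentiableAt ℝ f x) (hg : DifferentiableAt ℝ g x) :
    pd i (fun y => f y + g y) x = pd i f x + pd i g x := by
  unfold pd; rw [fderiv_fun_add hf hg]; simp

lemma pd_mul {n : ℕ} (i : Fin n) (f g : (Fin n → ℝ) → ℂ) (x : Fin n → ℝ)
    (hf : DifferentiableAt ℝ f x) (hg : DifferentiableAt ℝ g x) :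
    pd i (fun y => f y * g y) x = f x * pd i g x + g x * pd i f x := by
  unfold pd; rw [fderiv_fun_mul hf hg]; simp

lemma pd_conj {n : ℕ} (i : Fin n) (f : (Fin n → ℝ) → ℂ) (x : Fin n → ℝ) :
    pd i (fun y => (starRingEnd ℂ) (f y)) x = (starRingEnd ℂ) (pd i f x) := by
  unfold pd
  rw [show (fun y => (starRingEnd ℂ) (f y)) = (fun y => star (f y)) from rfl, fderiv_star]
  simp

lemma pd_contDiff {n : ℕ} (j : Fin n) (u : (Fin n → ℝ) → ℂ) (hu : ContDiff ℝ 2 u) :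
    ContDiff ℝ 1 (pd j u) := by
  have h := hu.fderiv_right (m := 1) (by norm_num)
  exact (ContinuousLinearMap.apply ℝ ℂ (Pi.single j 1)).contDiff.comp h

section main
variable {n : ℕ} (a : (Fin n → ℝ) → Matrix (Fin n) (Fin n) ℝ)
    (b : (Fin n → ℝ) → Fin n → ℝ) (u : (Fin n → ℝ) → ℂ)

lemma part1 (ha_symm : ∀ x, (a x).IsSymm) (hu : ContDiff ℝ 2 u)
    (lam : ℂ) (heq : ∀ x, Lop a b u x = lam * u x) (x : Fin n → ℝ) :
    Lop a b (fun y => u y * (starRingEnd ℂ) (u y)) x =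
        2 * (lam.re : ℂ) * (u x * (starRingEnd ℂ) (u x)) -
          2 * ∑ i, ∑ j, (a x i j : ℂ) * pd i u x * (starRingEnd ℂ) (pd j u x) := by
  have hud : Differentiable ℝ u := hu.differentiable (by norm_num)
  have hpdd : ∀ j, Differentiable ℝ (pd j u) :=
    fun j => (pd_contDiff j u hu).differentiable one_ne_zero
  have hcu : Differentiable ℝ (fun y => (starRingEnd ℂ) (u y)) := hud.star
  have hcpd : ∀ j, Differentiable ℝ (fun y => (starRingEnd ℂ) (pd j u y)) :=
    fun j => (hpdd j).star
  -- first derivative of |u|^2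
  have h1 : ∀ j y, pd j (fun y => u y * (starRingEnd ℂ) (u y)) y =
      u y * (starRingEnd ℂ) (pd j u y) + (starRingEnd ℂ) (u y) * pd j u y := by
    intro j y
    rw [pd_mul j u _ y (hud y) (hcu y), pd_conj]
  -- second derivative of |u|^2
  have h2 : ∀ i j, pd i (pd j (fun y => u y * (starRingEnd ℂ) (u y))) x =
      pd i u x * (starRingEnd ℂ) (pd j u x) + (starRingEnd ℂ) (pd i u x) * pd j u x +
      u x * (starRingEnd ℂ) (pd i (pd j u) x) + (starRingEnd ℂ) (u x) * pd i (pd j u) x := by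
    intro i j
    have hfe : pd j (fun y => u y * (starRingEnd ℂ) (u y)) =
        fun y => u y * (starRingEnd ℂ) (pd j u y) + (starRingEnd ℂ) (u y) * pd j u y :=
      funext (h1 j)
    rw [hfe, pd_add i _ _ x ((hud x).fun_mul (hcpd j x)) ((hcu x).fun_mul (hpdd j x)),
      pd_mul i u _ x (hud x) (hcpd j x), pd_mul i _ _ x (hcu x) (hpdd j x),
      pd_conj, pd_conj]
    ring
  -- the computation
  unfold Lop
  simp only [h2, h1]
  have hA : (starRingEnd ℂ) (∑ i, ∑ j, (a x i j : ℂ) * pd i (pd j u) x) =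
      ∑ i, ∑ j, (a x i j : ℂ) * (starRingEnd ℂ) (pd i (pd j u) x) := by
    simp [map_sum, Complex.conj_ofReal]
  have hB : (starRingEnd ℂ) (∑ i, (b x i : ℂ) * pd i u x) =
      ∑ i, (b x i : ℂ) * (starRingEnd ℂ) (pd i u x) := by
    simp [map_sum, Complex.conj_ofReal]
  have hsymm : ∑ i, ∑ j, (a x i j : ℂ) * ((starRingEnd ℂ) (pd i u x) * pd j u x) =
      ∑ i, ∑ j, (a x i j : ℂ) * pd i u x * (starRingEnd ℂ) (pd j u x) := by
    rw [Finset.sum_comm]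
    refine Finset.sum_congr rfl fun i _ => Finset.sum_congr rfl fun j _ => ?_
    rw [(ha_symm x).apply i j]
    ring
  have hlam : (starRingEnd ℂ) lam + lam = 2 * (lam.re : ℂ) := by
    rw [add_comm, Complex.add_conj]
    push_cast
    ring
  have key : Lop a b u x = lam * u x := heq x
  unfold Lop at key
  -- expand sums
  have expand : ∀ (c d e f : Fin n → Fin n → ℂ),
      (∑ i, ∑ j, (a x i j : ℂ) * (c i j + d i j + e i j + f i j)) =
      (∑ i, ∑ j, (a x i j : ℂ) * c i j) + (∑ i, ∑ j, (a x i j : ℂ) * d i j) +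
      (∑ i, ∑ j, (a x i j : ℂ) * e i j) + (∑ i, ∑ j, (a x i j : ℂ) * f i j) := by
    intro c d e f
    simp only [mul_add, Finset.sum_add_distrib]
  rw [expand (fun i j => pd i u x * (starRingEnd ℂ) (pd j u x))
    (fun i j => (starRingEnd ℂ) (pd i u x) * pd j u x)
    (fun i j => u x * (starRingEnd ℂ) (pd i (pd j u) x))
    (fun i j => (starRingEnd ℂ) (u x) * pd i (pd j u) x)]
  have e3 : (∑ i, ∑ j, (a x i j : ℂ) * (u x * (starRingEnd ℂ) (pd i (pd j u) x))) =
      u x * ∑ i, ∑ j, (a x i j : ℂ) * (starRingEnd ℂ) (pd i (pd j u) x) := by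
    simp only [Finset.mul_sum]; congr 1; ext i; congr 1; ext j; ring
  have e4 : (∑ i, ∑ j, (a x i j : ℂ) * ((starRingEnd ℂ) (u x) * pd i (pd j u) x)) =
      (starRingEnd ℂ) (u x) * ∑ i, ∑ j, (a x i j : ℂ) * pd i (pd j u) x := by
    simp only [Finset.mul_sum]; congr 1; ext i; congr 1; ext j; ring
  have e5 : (∑ i, (b x i : ℂ) * (u x * (starRingEnd ℂ) (pd i u x) + (starRingEnd ℂ) (u x) * pd i u x)) =
      u x * (∑ i, (b x i : ℂ) * (starRingEnd ℂ) (pd i u x)) +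
      (starRingEnd ℂ) (u x) * (∑ i, (b x i : ℂ) * pd i u x) := by
    simp only [mul_add, Finset.sum_add_distrib, Finset.mul_sum]
    congr 1
    · congr 1; ext i; ring
    · congr 1; ext i; ring
  rw [e3, e4, e5, hsymm, ← hA, ← hB]
  have hconjA : (starRingEnd ℂ) (∑ i, ∑ j, (a x i j : ℂ) * pd i (pd j u) x) =
      (starRingEnd ℂ) (∑ i, (b x i : ℂ) * pd i u x) - (starRingEnd ℂ) (lam * u x) := by
    rw [← map_sub]
    congr 1
    linear_combination -key
  have hAval : (∑ i, ∑ j, (a x i j : ℂ) * pd i (pd j u) x) =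
      (∑ i, (b x i : ℂ) * pd i u x) - lam * u x := by linear_combination -key
  rw [hconjA, hAval]
  rw [map_mul]
  linear_combination (norm := skip) (u x * (starRingEnd ℂ) (u x)) * hlam
  ring_nf


lemma part2 (ha_symm : ∀ x, (a x).IsSymm)
    (ha_pos : ∀ (x ξ : Fin n → ℝ), 0 ≤ ∑ i, ∑ j, a x i j * ξ i * ξ j)
    (x : Fin n → ℝ) (ζ : Fin n → ℂ) :
    (∑ i, ∑ j, (a x i j : ℂ) * ζ i * (starRingEnd ℂ) (ζ j)).im = 0 ∧
    0 ≤ (∑ i, ∑ j, (a x i j : ℂ) * ζ i * (starRingEnd ℂ) (ζ j)).re := by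
  constructor
  · simp only [Complex.im_sum, Complex.mul_im, Complex.mul_re, Complex.conj_re,
      Complex.conj_im, Complex.ofReal_re, Complex.ofReal_im]
    have : ∀ i j, (a x i j * (ζ i).re - 0 * (ζ i).im) * -(ζ j).im +
        (a x i j * (ζ i).im + 0 * (ζ i).re) * (ζ j).re =
        a x i j * (ζ i).im * (ζ j).re - a x i j * (ζ i).re * (ζ j).im := by
      intro i j; ring
    simp only [this]
    simp only [Finset.sum_sub_distrib]
    rw [sub_eq_zero]
    rw [Finset.sum_comm]
    refine Finset.sum_congr rfl fun i _ => Finset.sum_congr rfl fun j _ => ?_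
    rw [(ha_symm x).apply i j]
    ring
  · simp only [Complex.re_sum, Complex.mul_re, Complex.mul_im, Complex.conj_re,
      Complex.conj_im, Complex.ofReal_re, Complex.ofReal_im]
    have : ∀ i j, (a x i j * (ζ i).re - 0 * (ζ i).im) * (ζ j).re -
        (a x i j * (ζ i).im + 0 * (ζ i).re) * -(ζ j).im =
        a x i j * (ζ i).re * (ζ j).re + a x i j * (ζ i).im * (ζ j).im := by
      intro i j; ring
    simp only [this]
    simp only [Finset.sum_add_distrib]
    exact add_nonneg (ha_pos x fun i => (ζ i).re) (ha_pos x fun i => (ζ i).im)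


lemma part3 (ha_symm : ∀ x, (a x).IsSymm)
    (ha_pos : ∀ (x ξ : Fin n → ℝ), 0 ≤ ∑ i, ∑ j, a x i j * ξ i * ξ j)
    (hu : ContDiff ℝ 2 u)
    (lam : ℂ) (heq : ∀ x, Lop a b u x = lam * u x) (hlam : lam.re ≤ 0) (x : Fin n → ℝ) :
    (Lop a b (fun y => u y * (starRingEnd ℂ) (u y)) x).im = 0 ∧
    (Lop a b (fun y => u y * (starRingEnd ℂ) (u y)) x).re ≤ 0 := by
  have hS := part2 a ha_symm ha_pos x (fun i => pd i u x)
  rw [part1 a b u ha_symm hu lam heq x, Complex.mul_conj]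
  set S := ∑ i, ∑ j, (a x i j : ℂ) * pd i u x * (starRingEnd ℂ) (pd j u x) with hSdef
  constructor
  · simp [Complex.sub_im, Complex.mul_im, hS.1]
  · have h1 : (2 * (lam.re : ℂ) * ↑(Complex.normSq (u x)) - 2 * S).re =
        2 * lam.re * Complex.normSq (u x) - 2 * S.re := by
      simp [Complex.sub_re, Complex.mul_re, Complex.mul_im]
    rw [h1]
    nlinarith [Complex.normSq_nonneg (u x), hS.2, hlam]

end main

theorem L_of_abs_sq_nonpos (n : ℕ) (hn : 1 ≤ n)
    (a : (Fin n → ℝ) → Matrix (Fin n) (Fin n) ℝ)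
    (ha_symm : ∀ x, (a x).IsSymm)
    (ha_pos : ∀ (x ξ : Fin n → ℝ), 0 ≤ ∑ i, ∑ j, a x i j * ξ i * ξ j)
    (b : (Fin n → ℝ) → Fin n → ℝ)
    (u : (Fin n → ℝ) → ℂ) (hu : ContDiff ℝ 2 u)
    (lam : ℂ) (heq : ∀ x, Lop a b u x = lam * u x) :
    (∀ x, Lop a b (fun y => u y * (starRingEnd ℂ) (u y)) x =
        2 * (lam.re : ℂ) * (u x * (starRingEnd ℂ) (u x)) -
          2 * ∑ i, ∑ j, (a x i j : ℂ) * pd i u x * (starRingEnd ℂ) (pd j u x)) ∧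
    (∀ (x : Fin n → ℝ) (ζ : Fin n → ℂ),
        (∑ i, ∑ j, (a x i j : ℂ) * ζ i * (starRingEnd ℂ) (ζ j)).im = 0 ∧
        0 ≤ (∑ i, ∑ j, (a x i j : ℂ) * ζ i * (starRingEnd ℂ) (ζ j)).re) ∧
    (lam.re ≤ 0 → ∀ x,
        (Lop a b (fun y => u y * (starRingEnd ℂ) (u y)) x).im = 0 ∧
        (Lop a b (fun y => u y * (starRingEnd ℂ) (u y)) x).re ≤ 0) := by
  exact ⟨part1 a b u ha_symm hu lam heq, part2 a ha_symm ha_pos,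
    fun hlam x => part3 a b u ha_symm ha_pos hu lam heq hlam x⟩
end
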